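/- arXiv:2409.08241 — 12 statements merged into one kernel-verified Lean document; each statement's English description precedes it below -/
import Mathlib

section
/- For all sufficiently large m the following holds: with ℓ = ⌊(log₂ m)/4⌋ and k = ⌊exp(2·√m / log₂ m)⌋, there exists an ℓ-independent k-width-family of Fin m. -/
/-- A collection of bundles of `Fin m`, indexed by `ι`, is `ℓ`-sparse if the union of any
`ℓ - 1` (not necessarily distinct) members is not all of `Fin m`. -/
def Sparse (m ℓ : ℕ) {ι : Type*} (S : ι → Finset (Fin m)) : Prop :=
  ∀ g : Fin (ℓ - 1) → ι,
    (Finset.univ.sup fun t => S (g t)) ≠ (Finset.univ : Finset (Fin m))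

/-- A `k`-width-family of `Fin m`. -/
structure WidthFamily (m k : ℕ) where
  G : Fin k → Finset (Fin m)
  H : Fin 2 → Fin k → Fin k → Finset (Fin m)
  H0_sub : ∀ i j, H 0 i j ⊆ (G i)ᶜ
  H1_sub : ∀ i j, H 1 i j ⊆ G i

/-- The collection `F[b, C]` of `k²` bundles. -/
def WidthFamily.coll {m k : ℕ} (F : WidthFamily m k)
    (b : Fin k → Fin 2) (C : Fin k → Fin k → Fin 2) :
    Fin k × Fin k → Finset (Fin m) := fun p =>
  if b p.1 = 0 then
    if C p.1 p.2 = 0 then F.G p.1 ∪ F.H 0 p.1 p.2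
    else F.G p.1 ∪ ((F.G p.1)ᶜ \ F.H 0 p.1 p.2)
  else
    if C p.1 p.2 = 0 then (F.G p.1)ᶜ ∪ F.H 1 p.1 p.2
    else (F.G p.1)ᶜ ∪ (F.G p.1 \ F.H 1 p.1 p.2)

/-- `F` is `ℓ`-independent if `F[b, C]` is `ℓ`-sparse for every `b` and `C`. -/
def WidthFamily.Independent {m k : ℕ} (F : WidthFamily m k) (ℓ : ℕ) : Prop :=
  ∀ (b : Fin k → Fin 2) (C : Fin k → Fin k → Fin 2), Sparse m ℓ (F.coll b C)

namespace IndepAux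

/-- local "world" type: the membership pattern of a single point. -/
abbrev W (k : ℕ) : Type := (Fin k → Bool) × (Fin k → Fin k → Bool)

/-- event index: choice of ℓ'-tuple of pairs together with prescribed patterns. -/
abbrev Evt (k ℓ' : ℕ) : Type :=
  (Fin ℓ' → Fin k × Fin k) × (Fin ℓ' → Bool) × (Fin ℓ' → Bool)

def consistent {k ℓ' : ℕ} (e : Evt k ℓ') : Prop :=
  (∀ t t', (e.1 t).1 = (e.1 t').1 → e.2.1 t = e.2.1 t') ∧
  (∀ t t', e.1 t = e.1 t' → e.2.2 t = e.2.2 t')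

instance {k ℓ' : ℕ} : DecidablePred (consistent (k := k) (ℓ' := ℓ')) := fun _ => by
  unfold consistent; infer_instance

def SatSet {k ℓ' : ℕ} (e : Evt k ℓ') : Finset (W k) :=
  Finset.univ.filter
    (fun w => ∀ t, w.1 (e.1 t).1 = e.2.1 t ∧ w.2 (e.1 t).1 (e.1 t).2 = e.2.2 t)

lemma mem_SatSet {k ℓ' : ℕ} {e : Evt k ℓ'} {w : W k} :
    w ∈ SatSet e ↔ ∀ t, w.1 (e.1 t).1 = e.2.1 t ∧ w.2 (e.1 t).1 (e.1 t).2 = e.2.2 t := by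
  simp [SatSet]

lemma card_W (k : ℕ) : Fintype.card (W k) = 2 ^ (k + k * k) := by
  simp [W, Fintype.card_fun, pow_add, pow_mul]

/-- counting: consistent events have many satisfying local patterns. -/
lemma satset_card {k ℓ' : ℕ} {e : Evt k ℓ'} (he : consistent e) :
    2 ^ (k + k * k) ≤ (SatSet e).card * 4 ^ ℓ' := by
  classical
  obtain ⟨hβ, hγ⟩ := he
  -- correction map
  have hmem : ∀ w : W k,
      ((fun i => if h : ∃ t, (e.1 t).1 = i then e.2.1 h.choose else w.1 i,
        fun i j => if h : ∃ t, e.1 t = (i, j) then e.2.2 h.choose else w.2 i j) : W k)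
        ∈ SatSet e := by
    intro w
    rw [mem_SatSet]
    intro t
    constructor
    · have h : ∃ t', (e.1 t').1 = (e.1 t).1 := ⟨t, rfl⟩
      simp only [dif_pos h]
      exact hβ _ _ h.choose_spec
    · have h : ∃ t', e.1 t' = ((e.1 t).1, (e.1 t).2) := ⟨t, rfl⟩
      simp only [dif_pos h]
      exact hγ _ _ (by rw [h.choose_spec])
  set Φ : W k → {w // w ∈ SatSet e} × (Fin ℓ' → Bool) × (Fin ℓ' → Bool) :=
    fun w => (⟨_, hmem w⟩, fun t => w.1 (e.1 t).1, fun t => w.2 (e.1 t).1 (e.1 t).2)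
    with hΦ
  have hinj : Function.Injective Φ := by
    intro w w' h
    have h1 : (Φ w).1.1 = (Φ w').1.1 := by rw [h]
    have h2 : (Φ w).2.1 = (Φ w').2.1 := by rw [h]
    have h3 : (Φ w).2.2 = (Φ w').2.2 := by rw [h]
    simp only [hΦ, Prod.mk.injEq] at h1 h2 h3
    ext i j
    · by_cases hi : ∃ t, (e.1 t).1 = i
      · obtain ⟨t, ht⟩ := hi
        have := congrFun h2 t
        rw [ht] at this
        exact this
      · have := congrFun h1.1 i
        simpa [dif_neg hi] using this
    · by_cases hij : ∃ t, e.1 t = (i, j)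
      · obtain ⟨t, ht⟩ := hij
        have := congrFun h3 t
        rw [ht] at this
        exact this
      · have := congrFun (congrFun h1.2 i) j
        simpa [dif_neg hij] using this
  have hcard := Fintype.card_le_of_injective Φ hinj
  rw [card_W] at hcard
  calc 2 ^ (k + k * k)
      ≤ Fintype.card ({w // w ∈ SatSet e} × (Fin ℓ' → Bool) × (Fin ℓ' → Bool)) := hcard
    _ = (SatSet e).card * 4 ^ ℓ' := by
        simp only [Fintype.card_prod, Fintype.card_coe, Fintype.card_fun,
          Fintype.card_bool, Fintype.card_fin]
        rw [show (4:ℕ) = 2 * 2 by norm_num, mul_pow]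

def BadSet (m : ℕ) {k ℓ' : ℕ} (e : Evt k ℓ') : Finset (Fin m → W k) :=
  Fintype.piFinset (fun _ => (SatSet e)ᶜ)

lemma badset_card (m : ℕ) {k ℓ' : ℕ} (e : Evt k ℓ') :
    (BadSet m e).card = (2 ^ (k + k * k) - (SatSet e).card) ^ m := by
  rw [BadSet, Fintype.card_piFinset]
  simp only [Finset.card_compl, card_W, Finset.prod_const, Finset.card_univ, Fintype.card_fin]

/-- The key counting existence lemma. -/
lemma key_exists (m k ℓ' : ℕ)
    (hnum : (4 * (k * k)) ^ ℓ' * (2 ^ (k + k * k) - 2 ^ (k + k * k) / 4 ^ ℓ') ^ m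
      < (2 ^ (k + k * k)) ^ m) :
    ∃ (G : Fin k → Finset (Fin m)) (B : Fin k → Fin k → Finset (Fin m)),
      ∀ (b : Fin k → Fin 2) (C : Fin k → Fin k → Fin 2) (g : Fin ℓ' → Fin k × Fin k),
        ∃ x : Fin m, ∀ t, (x ∈ G (g t).1 ↔ b (g t).1 = 1) ∧
          (x ∈ B (g t).1 (g t).2 ↔ C (g t).1 (g t).2 = 1) := by
  classical
  by_contra hcon
  push_neg at hcon
  -- every ω is bad for some consistent event
  have cover : ∀ ω : Fin m → W k,
      ∃ e ∈ Finset.univ.filter (consistent (k := k) (ℓ' := ℓ')), ω ∈ BadSet m e := by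
    intro ω
    obtain ⟨b, C, g, hbad⟩ := hcon (fun i => Finset.univ.filter (fun x => (ω x).1 i))
      (fun i j => Finset.univ.filter (fun x => (ω x).2 i j))
    refine ⟨(g, fun t => decide (b (g t).1 = 1), fun t => decide (C (g t).1 (g t).2 = 1)),
      ?_, ?_⟩
    · simp only [Finset.mem_filter, Finset.mem_univ, true_and]
      constructor
      · intro t t' h; dsimp only at h ⊢; rw [h]
      · intro t t' h; dsimp only at h ⊢; rw [h]
    · rw [BadSet, Fintype.mem_piFinset]
      intro x
      rw [Finset.mem_compl]
      intro hx
      rw [mem_SatSet] at hx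
      dsimp only at hx
      obtain ⟨t, ht⟩ := hbad x
      obtain ⟨h1, h2⟩ := hx t
      rcases ht (by simp [Finset.mem_filter, h1]) with ⟨hB, hC⟩ | ⟨hB, hC⟩
      · simp [Finset.mem_filter, h2, hC] at hB
      · simp [Finset.mem_filter, h2, hC] at hB
  -- union bound
  have hsub : (Finset.univ : Finset (Fin m → W k)) ⊆
      (Finset.univ.filter (consistent (k := k) (ℓ' := ℓ'))).biUnion (BadSet m) := by
    intro ω _
    obtain ⟨e, he, hmem⟩ := cover ω
    exact Finset.mem_biUnion.mpr ⟨e, he, hmem⟩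
  have hle := (Finset.card_le_card hsub).trans (Finset.card_biUnion_le)
  have hbound : ∀ e ∈ Finset.univ.filter (consistent (k := k) (ℓ' := ℓ')),
      (BadSet m e).card ≤ (2 ^ (k + k * k) - 2 ^ (k + k * k) / 4 ^ ℓ') ^ m := by
    intro e he
    rw [badset_card]
    apply Nat.pow_le_pow_left
    apply Nat.sub_le_sub_left
    have hsat := satset_card (Finset.mem_filter.mp he).2
    calc 2 ^ (k + k * k) / 4 ^ ℓ' ≤ (SatSet e).card * 4 ^ ℓ' / 4 ^ ℓ' :=
          Nat.div_le_div_right hsat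
      _ = (SatSet e).card := Nat.mul_div_cancel _ (Nat.pow_pos (by norm_num))
  have hsum := Finset.sum_le_card_nsmul _ _ _ hbound
  have hcardE : (Finset.univ.filter (consistent (k := k) (ℓ' := ℓ'))).card
      ≤ (4 * (k * k)) ^ ℓ' := by
    calc (Finset.univ.filter (consistent (k := k) (ℓ' := ℓ'))).card
        ≤ Fintype.card (Evt k ℓ') := Finset.card_filter_le _ _
      _ = (4 * (k * k)) ^ ℓ' := by
          simp [Evt, Fintype.card_fun]
          rw [show (4 * (k * k)) ^ ℓ' = (k*k) ^ ℓ' * (2 ^ ℓ' * 2 ^ ℓ') by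
            rw [← mul_pow, ← mul_pow]; ring_nf]
  have hfin : (2 ^ (k + k * k)) ^ m ≤
      (4 * (k * k)) ^ ℓ' * (2 ^ (k + k * k) - 2 ^ (k + k * k) / 4 ^ ℓ') ^ m := by
    have h0 : (2 ^ (k + k * k)) ^ m = (Finset.univ : Finset (Fin m → W k)).card := by
      rw [Finset.card_univ, Fintype.card_fun, card_W, Fintype.card_fin]
    rw [h0]
    refine hle.trans (hsum.trans ?_)
    rw [smul_eq_mul]
    exact Nat.mul_le_mul_right _ hcardE
  exact absurd hfin (Nat.not_le.mpr hnum)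

lemma bridge (m k ℓ' : ℕ) (h2 : 2 * ℓ' ≤ k + k * k)
    (hR : ((4 * (k * k) : ℕ) : ℝ) ^ ℓ' * (1 - ((4:ℝ) ^ ℓ')⁻¹) ^ m < 1) :
    (4 * (k * k)) ^ ℓ' * (2 ^ (k + k * k) - 2 ^ (k + k * k) / 4 ^ ℓ') ^ m
      < (2 ^ (k + k * k)) ^ m := by
  set K := k + k * k with hK
  have h4 : (4:ℕ) ^ ℓ' = 2 ^ (2 * ℓ') := by rw [pow_mul]; norm_num
  have hdiv : (2:ℕ) ^ K / 4 ^ ℓ' = 2 ^ (K - 2 * ℓ') := by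
    rw [h4, Nat.pow_div h2 (by norm_num)]
  rw [hdiv]
  have hsub : (2:ℕ) ^ (K - 2 * ℓ') ≤ 2 ^ K := Nat.pow_le_pow_right (by norm_num) (Nat.sub_le _ _)
  rw [← Nat.cast_lt (α := ℝ)]
  push_cast [hsub]
  have hsplit : (2:ℝ) ^ K - 2 ^ (K - 2 * ℓ') = 2 ^ K * (1 - ((4:ℝ) ^ ℓ')⁻¹) := by
    have h1 : (2:ℝ) ^ (K - 2 * ℓ') * 2 ^ (2 * ℓ') = 2 ^ K := by
      rw [← pow_add, Nat.sub_add_cancel h2]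
    have h4' : (4:ℝ) ^ ℓ' = 2 ^ (2 * ℓ') := by rw [pow_mul]; norm_num
    have hp : (0:ℝ) < 2 ^ (2 * ℓ') := by positivity
    rw [h4']
    field_simp
    linarith [h1]
  rw [hsplit, mul_pow (2 ^ K) _ m]
  push_cast at hR
  have hpos : (0:ℝ) < ((2:ℝ) ^ K) ^ m := by positivity
  have h := mul_lt_mul_of_pos_left hR hpos
  rw [mul_one] at h
  calc ((4:ℝ) * ((k:ℝ) * k)) ^ ℓ' * (((2:ℝ) ^ K) ^ m * (1 - ((4:ℝ) ^ ℓ')⁻¹) ^ m)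
      = ((2:ℝ) ^ K) ^ m * ((4 * ((k:ℝ) * k)) ^ ℓ' * (1 - ((4:ℝ) ^ ℓ')⁻¹) ^ m) := by ring
    _ < ((2:ℝ) ^ K) ^ m := h

set_option maxHeartbeats 1600000 in
lemma params (m : ℕ) (hm : 8 ^ 8 ≤ m) :
    2 * (⌊Real.logb 2 (m:ℝ) / 4⌋₊ - 1) ≤ ⌊Real.exp (2 * Real.sqrt (m:ℝ) / Real.logb 2 (m:ℝ))⌋₊ +
      ⌊Real.exp (2 * Real.sqrt (m:ℝ) / Real.logb 2 (m:ℝ))⌋₊ *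
        ⌊Real.exp (2 * Real.sqrt (m:ℝ) / Real.logb 2 (m:ℝ))⌋₊ ∧
    ((4 * (⌊Real.exp (2 * Real.sqrt (m:ℝ) / Real.logb 2 (m:ℝ))⌋₊ *
        ⌊Real.exp (2 * Real.sqrt (m:ℝ) / Real.logb 2 (m:ℝ))⌋₊) : ℕ) : ℝ) ^
          (⌊Real.logb 2 (m:ℝ) / 4⌋₊ - 1) *
      (1 - ((4:ℝ) ^ (⌊Real.logb 2 (m:ℝ) / 4⌋₊ - 1))⁻¹) ^ m < 1 := by
  have hm' : ((8:ℝ) ^ (8:ℕ)) ≤ (m:ℝ) := by exact_mod_cast hm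
  have hm0 : (0:ℝ) < m := lt_of_lt_of_le (by positivity) hm'
  set r : ℝ := (m:ℝ) ^ ((8:ℝ)⁻¹) with hrdef
  have hr0 : 0 < r := Real.rpow_pos_of_pos hm0 _
  have hr8 : r ^ (8:ℕ) = m := by
    rw [hrdef, ← Real.rpow_natCast ((m:ℝ) ^ ((8:ℝ)⁻¹)) 8, ← Real.rpow_mul hm0.le]
    norm_num
  have hrge : (8:ℝ) ≤ r := by
    have h := Real.rpow_le_rpow (by positivity) hm' (by norm_num : (0:ℝ) ≤ (8:ℝ)⁻¹)
    rwa [← Real.rpow_natCast (8:ℝ) 8, ← Real.rpow_mul (by norm_num : (0:ℝ) ≤ 8),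
      show ((8:ℕ):ℝ) * (8:ℝ)⁻¹ = 1 by norm_num, Real.rpow_one] at h
  have hsqrt : Real.sqrt (m:ℝ) = r ^ (4:ℕ) := by
    rw [Real.sqrt_eq_rpow, hrdef, ← Real.rpow_natCast ((m:ℝ) ^ ((8:ℝ)⁻¹)) 4,
      ← Real.rpow_mul hm0.le]
    norm_num
  set L := Real.logb 2 (m:ℝ) with hLdef
  have hlogm : Real.log (m:ℝ) = 8 * Real.log r := by
    rw [hrdef, Real.log_rpow hm0]; ring
  have hlogr : Real.log r ≤ r := (Real.log_le_sub_one_of_pos hr0).trans (by linarith)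
  have hlog2 : (1/2 : ℝ) < Real.log 2 := by linarith [Real.log_two_gt_d9]
  have hL16 : L ≤ 16 * r := by
    rw [hLdef, Real.logb, hlogm, div_le_iff₀ (by linarith)]
    nlinarith [hlogr, hr0]
  have hL4 : (4:ℝ) ≤ L := by
    rw [hLdef]
    have h16 : (16:ℝ) ≤ (m:ℝ) := le_trans (by norm_num) hm'
    calc (4:ℝ) = Real.logb 2 (16:ℝ) := by
          rw [show (16:ℝ) = 2 ^ (4:ℕ) by norm_num, Real.logb_pow,
            Real.logb_self_eq_one (by norm_num)]
          norm_num
      _ ≤ _ := Real.logb_le_logb_of_le (by norm_num) (by norm_num) h16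
  have hL0 : (0:ℝ) < L := by linarith
  set u := 2 * Real.sqrt (m:ℝ) / L with hudef
  have huL : u * L = 2 * r ^ (4:ℕ) := by
    rw [hudef, div_mul_cancel₀ _ (ne_of_gt hL0), hsqrt]
  have hu0 : (0:ℝ) ≤ u := by
    rw [hudef]
    have := Real.sqrt_nonneg (m:ℝ)
    positivity
  set k := ⌊Real.exp u⌋₊ with hkdef
  have hk1 : 1 ≤ k := Nat.le_floor (by
    push_cast
    calc (1:ℝ) = Real.exp 0 := Real.exp_zero.symm
      _ ≤ Real.exp u := Real.exp_le_exp.mpr hu0)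
  have hkR : (k:ℝ) ≤ Real.exp u := Nat.floor_le (Real.exp_pos u).le
  have hku : u ≤ (k:ℝ) := by
    have h1 := Nat.lt_floor_add_one (Real.exp u)
    have h2 := Real.add_one_le_exp u
    rw [← hkdef] at h1
    linarith
  set ℓ := ⌊L / 4⌋₊ with hℓdef
  have hℓ1 : 1 ≤ ℓ := Nat.le_floor (by push_cast; linarith)
  have hℓR : (ℓ:ℝ) ≤ L / 4 := Nat.floor_le (by linarith)
  set n := ℓ - 1 with hndef
  have hnR : ((n:ℕ):ℝ) = (ℓ:ℝ) - 1 := by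
    rw [hndef]; push_cast [hℓ1]; ring
  have hn4 : ((n:ℕ):ℝ) ≤ L / 4 - 1 := by rw [hnR]; linarith
  have hn40 : ((n:ℕ):ℝ) ≤ L / 4 := by linarith
  have h64 : 64 * r ≤ r ^ (3:ℕ) := by
    nlinarith [mul_nonneg (mul_nonneg hr0.le (sub_nonneg.mpr hrge)) (by linarith : (0:ℝ) ≤ r + 8)]
  have hu_lb : r ^ (3:ℕ) / 8 ≤ u := by
    rw [hudef, hsqrt, div_le_div_iff₀ (by norm_num) hL0]
    nlinarith [mul_le_mul_of_nonneg_left hL16 (by positivity : (0:ℝ) ≤ r ^ (3:ℕ))]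
  constructor
  · -- 2 * n ≤ k + k * k
    have hcast : ((2 * n : ℕ) : ℝ) ≤ (k:ℝ) := by
      push_cast [hnR]
      linarith [hℓR, hL16, hku, hu_lb, h64]
    have h2 : 2 * n ≤ k := by exact_mod_cast hcast
    exact h2.trans (Nat.le_add_right _ _)
  · -- the real inequality
    have hkpos : (0:ℝ) < (k:ℝ) := by exact_mod_cast hk1
    have hlogk : Real.log (k:ℝ) ≤ u := (Real.log_le_iff_le_exp hkpos).mpr hkR
    have hNEpos : (0:ℝ) < ((4 * (k * k) : ℕ) : ℝ) := by positivity
    have hlog4 : Real.log (4:ℝ) ≤ 2 := by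
      rw [show (4:ℝ) = 2 ^ (2:ℕ) by norm_num, Real.log_pow]
      push_cast
      nlinarith [Real.log_two_lt_d9]
    have hlogNE : Real.log ((4 * (k * k) : ℕ) : ℝ) ≤ 2 + 2 * u := by
      push_cast
      rw [Real.log_mul (by norm_num) (by positivity),
        Real.log_mul (ne_of_gt hkpos) (ne_of_gt hkpos)]
      linarith only [hlog4, hlogk]
    have hlogNE0 : (0:ℝ) ≤ Real.log ((4 * (k * k) : ℕ) : ℝ) := by
      apply Real.log_nonneg
      have h1 : (1:ℕ) ≤ 4 * (k * k) := by
        calc (1:ℕ) ≤ 1 * (1 * 1) := by norm_num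
          _ ≤ 4 * (k * k) := Nat.mul_le_mul (by norm_num) (Nat.mul_le_mul hk1 hk1)
      exact_mod_cast h1
    have h4n : (4:ℝ) ^ (n:ℕ) ≤ r ^ (4:ℕ) / 4 := by
      have h1 : (4:ℝ) ^ (n:ℕ) = Real.exp (((n:ℕ):ℝ) * Real.log 4) := by
        rw [Real.exp_nat_mul, Real.exp_log (by norm_num : (0:ℝ) < 4)]
      rw [h1]
      have h2 : ((n:ℕ):ℝ) * Real.log 4 ≤ (L / 4 - 1) * Real.log 4 :=
        mul_le_mul_of_nonneg_right hn4 (Real.log_nonneg (by norm_num))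
      calc Real.exp (((n:ℕ):ℝ) * Real.log 4) ≤ Real.exp ((L / 4 - 1) * Real.log 4) :=
            Real.exp_le_exp.mpr h2
        _ = r ^ (4:ℕ) / 4 := by
            rw [sub_mul, one_mul, Real.exp_sub]
            congr 1
            · rw [show (L / 4) * Real.log 4 = Real.log 2 * (L * (1/2)) by
                rw [show (4:ℝ) = 2 ^ (2:ℕ) by norm_num, Real.log_pow]; push_cast; ring]
              rw [← Real.rpow_def_of_pos (by norm_num : (0:ℝ) < 2),
                Real.rpow_mul (by norm_num : (0:ℝ) ≤ 2), hLdef,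
                Real.rpow_logb (by norm_num) (by norm_num) hm0,
                ← Real.sqrt_eq_rpow, hsqrt]
            · exact Real.exp_log (by norm_num)
    have h40 : (0:ℝ) < (4:ℝ) ^ (n:ℕ) := by positivity
    have hr4 : (0:ℝ) < r ^ (4:ℕ) := by positivity
    have hinv : 4 / r ^ (4:ℕ) ≤ ((4:ℝ) ^ (n:ℕ))⁻¹ := by
      have h5 := one_div_le_one_div_of_le h40 h4n
      rw [one_div, one_div] at h5
      calc 4 / r ^ (4:ℕ) = (r ^ (4:ℕ) / 4)⁻¹ := by rw [inv_div]
        _ ≤ _ := h5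
    have hmε : 4 * r ^ (4:ℕ) ≤ (m:ℝ) * ((4:ℝ) ^ (n:ℕ))⁻¹ := by
      calc 4 * r ^ (4:ℕ) = r ^ (8:ℕ) * (4 / r ^ (4:ℕ)) := by
            field_simp
        _ ≤ r ^ (8:ℕ) * ((4:ℝ) ^ (n:ℕ))⁻¹ := mul_le_mul_of_nonneg_left hinv (by positivity)
        _ = (m:ℝ) * ((4:ℝ) ^ (n:ℕ))⁻¹ := by rw [hr8]
    have h3 : 8 * r + r ^ (4:ℕ) < 4 * r ^ (4:ℕ) := by
      nlinarith [hr0, hrge, mul_le_mul_of_nonneg_left hrge (by positivity : (0:ℝ) ≤ r^(3:ℕ))]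
    have hexp : ((n:ℕ):ℝ) * Real.log ((4 * (k * k) : ℕ) : ℝ) < (m:ℝ) * ((4:ℝ) ^ (n:ℕ))⁻¹ := by
      have h1 : ((n:ℕ):ℝ) * Real.log ((4 * (k * k) : ℕ) : ℝ) ≤ (L/4) * (2 + 2*u) :=
        mul_le_mul hn40 hlogNE hlogNE0 (by linarith)
      have h2 : (L/4) * (2 + 2*u) = L/2 + (u*L)/2 := by ring
      rw [huL] at h2
      linarith [hL16, hmε, h3]
    have hε0 : (0:ℝ) < ((4:ℝ) ^ (n:ℕ))⁻¹ := by positivity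
    have hε1 : ((4:ℝ) ^ (n:ℕ))⁻¹ ≤ 1 := by
      rw [inv_le_one_iff₀]
      right
      exact one_le_pow₀ (by norm_num)
    have hstep1 : (1 - ((4:ℝ) ^ (n:ℕ))⁻¹) ^ m ≤ Real.exp (-(((4:ℝ) ^ (n:ℕ))⁻¹)) ^ m :=
      pow_le_pow_left₀ (by linarith)
        (by linarith [Real.add_one_le_exp (-(((4:ℝ) ^ (n:ℕ))⁻¹))]) m
    have hstep2 : Real.exp (-(((4:ℝ) ^ (n:ℕ))⁻¹)) ^ m
        = Real.exp (-((m:ℝ) * ((4:ℝ) ^ (n:ℕ))⁻¹)) := by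
      rw [← Real.exp_nat_mul]
      congr 1
      ring
    have hNE : ((4 * (k * k) : ℕ) : ℝ) ^ (n:ℕ)
        = Real.exp (((n:ℕ):ℝ) * Real.log ((4 * (k * k) : ℕ) : ℝ)) := by
      rw [Real.exp_nat_mul, Real.exp_log hNEpos]
    calc ((4 * (k * k) : ℕ) : ℝ) ^ (n:ℕ) * (1 - ((4:ℝ) ^ (n:ℕ))⁻¹) ^ m
        ≤ ((4 * (k * k) : ℕ) : ℝ) ^ (n:ℕ) * Real.exp (-((m:ℝ) * ((4:ℝ) ^ (n:ℕ))⁻¹)) := by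
          apply mul_le_mul_of_nonneg_left (hstep1.trans (le_of_eq hstep2)) (by positivity)
      _ = Real.exp (((n:ℕ):ℝ) * Real.log ((4 * (k * k) : ℕ) : ℝ)
            - (m:ℝ) * ((4:ℝ) ^ (n:ℕ))⁻¹) := by
          rw [hNE, ← Real.exp_add, sub_eq_add_neg]
      _ < Real.exp 0 := Real.exp_lt_exp.mpr (by linarith [hexp])
      _ = 1 := Real.exp_zero

end IndepAux

/-- For all sufficiently large `m`, with `ℓ = ⌊(log₂ m)/4⌋` and
`k = ⌊exp (2√m / log₂ m)⌋`, there exists an `ℓ`-independent `k`-width-family of `Fin m`. -/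
theorem exists_independent_width_family :
    ∃ m₀ : ℕ, ∀ m : ℕ, m₀ ≤ m →
      ∃ F : WidthFamily m ⌊Real.exp (2 * Real.sqrt m / Real.logb 2 m)⌋₊,
        F.Independent ⌊Real.logb 2 m / 4⌋₊ := by
  refine ⟨8 ^ 8, fun m hm => ?_⟩
  obtain ⟨h2, hR⟩ := IndepAux.params m hm
  obtain ⟨G, B, hGB⟩ := IndepAux.key_exists m ⌊Real.exp (2 * Real.sqrt m / Real.logb 2 m)⌋₊
    (⌊Real.logb 2 (m:ℝ) / 4⌋₊ - 1) (IndepAux.bridge _ _ _ h2 hR)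
  refine ⟨⟨G, fun t i j => if t = 0 then B i j \ G i else B i j ∩ G i, ?_, ?_⟩, ?_⟩
  · intro i j
    simp only [if_pos rfl]
    intro x hx
    rw [Finset.mem_compl]
    exact (Finset.mem_sdiff.mp hx).2
  · intro i j
    simp only [if_neg (by decide : ¬ (1 : Fin 2) = 0)]
    exact Finset.inter_subset_right
  · intro b C g hsup
    obtain ⟨x, hx⟩ := hGB b C g
    have hxmem := Finset.mem_univ x
    rw [← hsup, Finset.mem_sup] at hxmem
    obtain ⟨t, -, hxt⟩ := hxmem
    obtain ⟨hG, hB⟩ := hx t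
    rw [WidthFamily.coll] at hxt
    by_cases hb : b (g t).1 = 0
    · have hxG : x ∉ G (g t).1 := fun h => by
        have := hG.mp h; omega
      by_cases hc : C (g t).1 (g t).2 = 0
      · have hxB : x ∉ B (g t).1 (g t).2 := fun h => by
          have := hB.mp h; omega
        simp [hb, hc, Finset.mem_union, Finset.mem_sdiff] at hxt
        tauto
      · have hxB : x ∈ B (g t).1 (g t).2 := hB.mpr (by omega)
        simp [hb, hc, Finset.mem_union, Finset.mem_sdiff, Finset.mem_compl] at hxt
        tauto
    · have hxG : x ∈ G (g t).1 := hG.mpr (by omega)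
      by_cases hc : C (g t).1 (g t).2 = 0
      · have hxB : x ∉ B (g t).1 (g t).2 := fun h => by
          have := hB.mp h; omega
        simp [hb, hc, Finset.mem_union, Finset.mem_inter, Finset.mem_compl] at hxt
        tauto
      · have hxB : x ∈ B (g t).1 (g t).2 := hB.mpr (by omega)
        simp [hb, hc, Finset.mem_union, Finset.mem_sdiff, Finset.mem_inter, Finset.mem_compl] at hxt
        tauto
end

section
/- Let m, k, ℓ be positive integers with ℓ ≤ k² and suppose that, as real numbers, (k² choose ℓ) · 4^ℓ · (1 − 4^{−ℓ})^m < 1. Then there exists an ℓ-independent k-width-family of Fin m. -/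
/-! Give every item an independent uniformly random profile in `Coord k → Fin 2`: one bit deciding
its side of each `G i`, and one bit for each `(t, i, j)` deciding membership in `H t i j` for
items on side `t` of `G i`. An item then lies outside the bundle `S_{i,j}` of `F[b, C]` exactly
when its profile matches `(b i, C i j)` at two coordinates. Sparseness fails only if some set
`T` of `ℓ` index pairs covers every item; for fixed `T`, `b`, `C` an item escapes `T` with
probability at least `4^{-ℓ}`, since at most `2ℓ` coordinates are prescribed, so all `m` items
are covered with probability at most `(1 - 4^{-ℓ})^m`. This event depends on `b`, `C` only
through at most `4^ℓ` values on `T`, and a union bound over the `(k² choose ℓ)` sets `T`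
finishes the proof. The probabilities are phrased as counts of profile assignments. -/

open Finset

theorem card_filter_forall_mem_eq {α β : Type*} [Fintype α] [DecidableEq α] [Fintype β]
    [DecidableEq β] (D : Finset α) (c : α → β) :
    #{f : α → β | ∀ a ∈ D, f a = c a} = Fintype.card β ^ (Fintype.card α - #D) := by
  have hpi : ({f : α → β | ∀ a ∈ D, f a = c a} : Finset _) =
      Fintype.piFinset fun a => if a ∈ D then {c a} else univ := by
    ext f
    simp only [mem_filter, mem_univ, true_and, Fintype.mem_piFinset]
    refine forall_congr' fun a => ?_
    split_ifs with ha <;> simp [ha]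
  rw [hpi, Fintype.card_piFinset]
  simp [apply_ite card, prod_ite, filter_not, card_sdiff_of_subset]

theorem mul_pow_mul_sub_lt_pow {J B q m : ℕ} (hB : 0 < B) (hq : 0 < q)
    (h : (J : ℝ) * (1 - (q : ℝ)⁻¹) ^ m < 1) : J * (B * q - B) ^ m < (B * q) ^ m := by
  have hsub : ((B * q - B : ℕ) : ℝ) = B * q * (1 - (q : ℝ)⁻¹) := by
    rw [Nat.cast_sub (Nat.le_mul_of_pos_right B hq)]
    field_simp
    push_cast
    ring
  have hpos : (0 : ℝ) < ((B * q : ℕ) : ℝ) ^ m := by positivity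
  have hreal : (J : ℝ) * ((B * q - B : ℕ) : ℝ) ^ m < ((B * q : ℕ) : ℝ) ^ m := by
    rw [hsub, mul_pow, ← mul_assoc, mul_comm (J : ℝ), mul_assoc]
    push_cast at hpos ⊢
    exact mul_lt_of_lt_one_right hpos h
  exact_mod_cast hreal

namespace WidthFamily

abbrev Coord (k : ℕ) := Fin k ⊕ Fin 2 × (Fin k × Fin k)

def ofProfiles {m k : ℕ} (ω : Fin m → Coord k → Fin 2) : WidthFamily m k where
  G i := {x | ω x (.inl i) = 1}
  H t i j := {x | ω x (.inl i) = t ∧ ω x (.inr (t, i, j)) = 1}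
  H0_sub i j x hx := by simp_all
  H1_sub i j x hx := by simp_all

abbrev Avoids {k : ℕ} (a : Coord k → Fin 2) (p : Fin k × Fin k) (w : Fin 2 × Fin 2) : Prop :=
  a (.inl p.1) = w.1 ∧ a (.inr (w.1, p)) = w.2

theorem mem_coll_ofProfiles_iff {m k : ℕ} (ω : Fin m → Coord k → Fin 2) (b : Fin k → Fin 2)
    (C : Fin k → Fin k → Fin 2) (p : Fin k × Fin k) (x : Fin m) :
    x ∈ (ofProfiles ω).coll b C p ↔ ¬ Avoids (ω x) p (b p.1, C p.1 p.2) := by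
  obtain ⟨i, j⟩ := p
  have two : ∀ t : Fin 2, t = 0 ∨ t = 1 := by decide
  rcases two (b i) with hb | hb <;> rcases two (C i j) with hc | hc <;>
    rcases two (ω x (.inl i)) with hg | hg <;>
    rcases two (ω x (.inr (b i, i, j))) with hh | hh <;>
    simp_all [coll, ofProfiles]

def pattern {k : ℕ} (b : Fin k → Fin 2) (C : Fin k → Fin k → Fin 2) : Coord k → Fin 2 :=
  Sum.elim b fun q => C q.2.1 q.2.2

def avoidSupport {k : ℕ} (b : Fin k → Fin 2) (T : Finset (Fin k × Fin k)) : Finset (Coord k) :=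
  T.image (fun p => .inl p.1) ∪ T.image (fun p => .inr (b p.1, p))

theorem card_avoidSupport_le {k : ℕ} (b : Fin k → Fin 2) (T : Finset (Fin k × Fin k)) :
    #(avoidSupport b T) ≤ 2 * #T :=
  calc #(avoidSupport b T) ≤ #T + #T :=
        (card_union_le _ _).trans (add_le_add card_image_le card_image_le)
    _ = 2 * #T := (two_mul _).symm

theorem forall_avoids_iff {k : ℕ} (a : Coord k → Fin 2) (b : Fin k → Fin 2)
    (C : Fin k → Fin k → Fin 2) (T : Finset (Fin k × Fin k)) :
    (∀ p ∈ T, Avoids a p (b p.1, C p.1 p.2)) ↔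
      ∀ s ∈ avoidSupport b T, a s = pattern b C s := by
  simp only [avoidSupport, mem_union, mem_image]
  constructor
  · rintro h s (⟨p, hp, rfl⟩ | ⟨p, hp, rfl⟩)
    exacts [(h p hp).1, (h p hp).2]
  · exact fun h p hp => ⟨h _ (.inl ⟨p, hp, rfl⟩), h _ (.inr ⟨p, hp, rfl⟩)⟩

theorem two_pow_le_card_avoiders {k : ℕ} (b : Fin k → Fin 2) (C : Fin k → Fin k → Fin 2)
    (T : Finset (Fin k × Fin k)) :
    2 ^ (Fintype.card (Coord k) - 2 * #T) ≤
      #{a : Coord k → Fin 2 | ∀ p ∈ T, Avoids a p (b p.1, C p.1 p.2)} := by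
  simp_rw [forall_avoids_iff, card_filter_forall_mem_eq, Fintype.card_fin]
  have := card_avoidSupport_le b T
  exact Nat.pow_le_pow_right two_pos (by omega)

-- Forgetting `b`, `C` outside `T` leaves at most `4 ^ #T` values, which is what the union bound
-- counts, while `coverEvent m T` sees no difference.
def restrict {k : ℕ} (T : Finset (Fin k × Fin k))
    (bC : (Fin k → Fin 2) × (Fin k → Fin k → Fin 2)) : Fin k × Fin k → Fin 2 × Fin 2 :=
  fun p => if p ∈ T then (bC.1 p.1, bC.2 p.1 p.2) else 0

theorem card_image_restrict_le {k : ℕ} (T : Finset (Fin k × Fin k)) :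
    #(univ.image (restrict T)) ≤ 4 ^ #T := by
  calc #(univ.image (restrict T))
      ≤ #{v : Fin k × Fin k → Fin 2 × Fin 2 | ∀ p ∈ Tᶜ, v p = 0} := by
        refine card_le_card fun v hv => ?_
        obtain ⟨bC, -, rfl⟩ := mem_image.mp hv
        simp_all [restrict]
    _ = 4 ^ #T := by
        rw [card_filter_forall_mem_eq, card_compl, Nat.sub_sub_self (card_le_univ T)]
        rfl

def coverEvent (m : ℕ) {k : ℕ} (T : Finset (Fin k × Fin k))
    (v : Fin k × Fin k → Fin 2 × Fin 2) : Finset (Fin m → Coord k → Fin 2) :=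
  Fintype.piFinset fun _ => {a | ∃ p ∈ T, ¬ Avoids a p (v p)}

theorem card_coverEvent_restrict_le (m : ℕ) {k : ℕ} (T : Finset (Fin k × Fin k))
    (b : Fin k → Fin 2) (C : Fin k → Fin k → Fin 2) :
    #(coverEvent m T (restrict T (b, C))) ≤
      (2 ^ Fintype.card (Coord k) - 2 ^ (Fintype.card (Coord k) - 2 * #T)) ^ m := by
  rw [coverEvent, Fintype.card_piFinset, prod_const, card_univ, Fintype.card_fin]
  refine Nat.pow_le_pow_left ?_ m
  have hcompl :
      ({a | ∃ p ∈ T, ¬ Avoids a p (restrict T (b, C) p)} : Finset (Coord k → Fin 2)) =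
        univ \ ({a | ∀ p ∈ T, Avoids a p (b p.1, C p.1 p.2)} : Finset _) := by
    ext a
    simp only [mem_filter, mem_sdiff, mem_univ, true_and, not_forall, exists_prop]
    exact exists_congr fun p => and_congr_right fun hp => by simp only [restrict, if_pos hp]
  rw [hcompl, card_univ_sdiff, Fintype.card_fun, Fintype.card_fin]
  exact Nat.sub_le_sub_left (two_pow_le_card_avoiders b C T) _

def badProfiles (m k ℓ : ℕ) : Finset (Fin m → Coord k → Fin 2) :=
  (powersetCard ℓ univ).biUnion fun T => (univ.image (restrict T)).biUnion (coverEvent m T)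

theorem mem_badProfiles_of_not_independent {m k ℓ : ℕ} (hℓk : ℓ ≤ k ^ 2)
    {ω : Fin m → Coord k → Fin 2} (h : ¬ (ofProfiles ω).Independent ℓ) :
    ω ∈ badProfiles m k ℓ := by
  simp only [Independent, Sparse, not_forall, not_not] at h
  obtain ⟨b, C, g, hg⟩ := h
  have hcard : #(univ.image g) ≤ ℓ := card_image_le.trans (by simp)
  obtain ⟨T, hgT, hT⟩ := exists_superset_card_eq hcard (by simpa [sq] using hℓk)
  refine mem_biUnion.mpr ⟨T, mem_powersetCard.mpr ⟨subset_univ T, hT⟩,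
    mem_biUnion.mpr ⟨_, mem_image_of_mem _ (mem_univ (b, C)), ?_⟩⟩
  refine Fintype.mem_piFinset.mpr fun x => mem_filter.mpr ⟨mem_univ _, ?_⟩
  obtain ⟨t, -, hxt⟩ := mem_sup.mp (hg ▸ mem_univ x)
  have hgt : g t ∈ T := hgT (mem_image_of_mem g (mem_univ t))
  refine ⟨g t, hgt, ?_⟩
  simpa only [restrict, if_pos hgt] using (mem_coll_ofProfiles_iff ω b C (g t) x).mp hxt

theorem card_badProfiles_le (m k ℓ : ℕ) :
    #(badProfiles m k ℓ) ≤ (k ^ 2).choose ℓ * 4 ^ ℓ *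
      (2 ^ Fintype.card (Coord k) - 2 ^ (Fintype.card (Coord k) - 2 * ℓ)) ^ m := by
  set bound := (2 ^ Fintype.card (Coord k) - 2 ^ (Fintype.card (Coord k) - 2 * ℓ)) ^ m
  calc #(badProfiles m k ℓ)
      ≤ ∑ T ∈ powersetCard ℓ univ, ∑ v ∈ univ.image (restrict T), #(coverEvent m T v) :=
        card_biUnion_le.trans (sum_le_sum fun _ _ => card_biUnion_le)
    _ ≤ ∑ T ∈ powersetCard ℓ (univ : Finset (Fin k × Fin k)), 4 ^ ℓ * bound := by
        refine sum_le_sum fun T hT => ?_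
        have hTcard : #T = ℓ := (mem_powersetCard.mp hT).2
        refine (sum_le_card_nsmul _ _ bound fun v hv => ?_).trans ?_
        · obtain ⟨⟨b, C⟩, -, rfl⟩ := mem_image.mp hv
          simpa only [hTcard] using card_coverEvent_restrict_le m T b C
        · exact Nat.mul_le_mul_right bound (hTcard ▸ card_image_restrict_le T)
    _ = (k ^ 2).choose ℓ * 4 ^ ℓ * bound := by
        rw [sum_const, card_powersetCard, card_univ, Fintype.card_prod, Fintype.card_fin, sq,
          smul_eq_mul, mul_assoc]

end WidthFamily

theorem exists_independent_width_family_of_union_bound_general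
    (m k ℓ : ℕ) (hℓk : ℓ ≤ k ^ 2)
    (hbound : (Nat.choose (k ^ 2) ℓ : ℝ) * 4 ^ ℓ * (1 - (4 : ℝ) ^ (-(ℓ : ℤ))) ^ m < 1) :
    ∃ F : WidthFamily m k, F.Independent ℓ := by
  set N := Fintype.card (WidthFamily.Coord k)
  have hN : 2 ^ N = 2 ^ (N - 2 * ℓ) * 4 ^ ℓ := by
    have h2ℓ : 2 * ℓ ≤ N := by
      simp only [N, Fintype.card_sum, Fintype.card_prod, Fintype.card_fin]
      nlinarith
    rw [show (4 : ℕ) = 2 ^ 2 from rfl, ← pow_mul, ← pow_add, Nat.sub_add_cancel h2ℓ]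
  have hlt : #(WidthFamily.badProfiles m k ℓ) < (2 ^ N) ^ m :=
    calc #(WidthFamily.badProfiles m k ℓ)
        ≤ (k ^ 2).choose ℓ * 4 ^ ℓ * (2 ^ N - 2 ^ (N - 2 * ℓ)) ^ m :=
          WidthFamily.card_badProfiles_le m k ℓ
      _ < (2 ^ N) ^ m := by
          rw [hN]
          refine mul_pow_mul_sub_lt_pow (by positivity) (by positivity) ?_
          simpa [zpow_neg] using hbound
  have hcard : #(univ : Finset (Fin m → WidthFamily.Coord k → Fin 2)) = (2 ^ N) ^ m := by
    simp [N]
  obtain ⟨ω, -, hω⟩ := exists_mem_notMem_of_card_lt_card (hcard ▸ hlt)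
  exact ⟨WidthFamily.ofProfiles ω,
    by_contra fun h => hω (WidthFamily.mem_badProfiles_of_not_independent hℓk h)⟩

/-- If `(k² choose ℓ) · 4^ℓ · (1 − 4^{−ℓ})^m < 1` (as real numbers), then there exists an
`ℓ`-independent `k`-width-family of `Fin m`. -/
theorem exists_independent_width_family_of_union_bound
    (m k ℓ : ℕ) (hm : 0 < m) (hk : 0 < k) (hℓ : 0 < ℓ) (hℓk : ℓ ≤ k ^ 2)
    (hbound : (Nat.choose (k ^ 2) ℓ : ℝ) * 4 ^ ℓ * (1 - (4 : ℝ) ^ (-(ℓ : ℤ))) ^ m < 1) :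
    ∃ F : WidthFamily m k, F.Independent ℓ :=
  exists_independent_width_family_of_union_bound_general m k ℓ hℓk hbound
end

section
/- Let K be a positive integer, let T, Γ, R be types, let v : (Fin K → Fin 4) → T, let τ : T × T → Γ, let g : Γ → R, and set f = g ∘ τ. Assume the rectangle property: for all x, x', y, y' ∈ T, if τ(x,y) = τ(x',y') then τ(x,y') = τ(x,y). Assume further that for all b₁, b₂, b₃, b₄ : Fin K → Fin 4 for which there exists an index i ∈ Fin K with b₁(i), b₂(i), b₃(i), b₄(i) pairwise distinct, we have f(v(b₁), v(b₂)) ≠ f(v(b₃), v(b₄)). Then the number of distinct values of the map b ↦ τ(v(b), v(b)), as b ranges over all of (Fin K → Fin 4), is at least 4^K / 3^K; that is, 3^K times the cardinality of the image of this map is at least 4^K. -/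
/-!
By the rectangle property, if two strings `b, b'` share the diagonal transcript `c`, then so
does the cross transcript `τ (v b, v b')`. Hence `f (v b₁, v b₂) = f (v b₃, v b₄) = g c` for
any `b₁, …, b₄` in the fiber of `c` under the diagonal map, so no coordinate of a fiber can take
all four letters: every fiber lies in a product of `3`-letter alphabets and has at most `3 ^ K`
elements. The `4 ^ K` strings are thus spread over at least `4 ^ K / 3 ^ K` fibers.
-/

open Finset

lemma cross_eq_of_diag_eq {T Γ : Type*} {τ : T × T → Γ}
    (hrect : ∀ x x' y y' : T, τ (x, y) = τ (x', y') → τ (x, y') = τ (x, y))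
    {x y : T} {c : Γ} (hx : τ (x, x) = c) (hy : τ (y, y) = c) : τ (x, y) = c :=
  (hrect x y x y (hx.trans hy.symm)).trans hx

lemma Finset.card_le_pow_of_card_image_apply_le {ι α : Type*} [Fintype ι] [DecidableEq ι]
    [DecidableEq α] (S : Finset (ι → α)) {m : ℕ} (h : ∀ i, #(S.image (· i)) ≤ m) :
    #S ≤ m ^ Fintype.card ι :=
  calc #S ≤ #(Fintype.piFinset fun i => S.image (· i)) :=
        card_le_card fun _ hb => Fintype.mem_piFinset.2 fun _ => mem_image_of_mem _ hb
    _ = ∏ i, #(S.image (· i)) := Fintype.card_piFinset _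
    _ ≤ m ^ Fintype.card ι := prod_le_pow_card _ _ _ fun i _ => h i

lemma card_filter_diag_eq_le {K : ℕ} {T Γ : Type*} [DecidableEq Γ]
    (v : (Fin K → Fin 4) → T) {τ : T × T → Γ}
    (hrect : ∀ x x' y y' : T, τ (x, y) = τ (x', y') → τ (x, y') = τ (x, y))
    (hdiff : ∀ b₁ b₂ b₃ b₄ : Fin K → Fin 4,
      (∃ i : Fin K, b₁ i ≠ b₂ i ∧ b₁ i ≠ b₃ i ∧ b₁ i ≠ b₄ i ∧
        b₂ i ≠ b₃ i ∧ b₂ i ≠ b₄ i ∧ b₃ i ≠ b₄ i) →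
      τ (v b₁, v b₂) ≠ τ (v b₃, v b₄))
    (c : Γ) : #{b | τ (v b, v b) = c} ≤ 3 ^ K := by
  set S : Finset (Fin K → Fin 4) := {b | τ (v b, v b) = c}
  have hcross : ∀ b ∈ S, ∀ b' ∈ S, τ (v b, v b') = c := fun b hb b' hb' =>
    cross_eq_of_diag_eq hrect (mem_filter.1 hb).2 (mem_filter.1 hb').2
  have hproj : ∀ i, #(S.image (· i)) ≤ 3 := by
    intro i
    by_contra! hlt
    have hsurj : S.image (· i) = univ :=
      eq_univ_of_card _ ((card_le_univ _).antisymm (by rw [Fintype.card_fin]; exact hlt))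
    have hall : ∀ j : Fin 4, ∃ b ∈ S, b i = j := fun j => mem_image.1 (hsurj ▸ mem_univ j)
    obtain ⟨b₁, hb₁, h₁⟩ := hall 0
    obtain ⟨b₂, hb₂, h₂⟩ := hall 1
    obtain ⟨b₃, hb₃, h₃⟩ := hall 2
    obtain ⟨b₄, hb₄, h₄⟩ := hall 3
    refine hdiff b₁ b₂ b₃ b₄ ⟨i, ?_⟩ ((hcross b₁ hb₁ b₂ hb₂).trans (hcross b₃ hb₃ b₄ hb₄).symm)
    simp only [h₁, h₂, h₃, h₄]
    decide
  simpa using S.card_le_pow_of_card_image_apply_le hproj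

theorem four_tuple_rectangle_argument_general
    (K : ℕ) {T Γ R : Type*} [DecidableEq Γ]
    (v : (Fin K → Fin 4) → T) (τ : T × T → Γ) (g : Γ → R)
    (f : T × T → R) (hf : f = g ∘ τ)
    (hrect : ∀ x x' y y' : T, τ (x, y) = τ (x', y') → τ (x, y') = τ (x, y))
    (hdiff : ∀ b₁ b₂ b₃ b₄ : Fin K → Fin 4,
      (∃ i : Fin K, b₁ i ≠ b₂ i ∧ b₁ i ≠ b₃ i ∧ b₁ i ≠ b₄ i ∧
        b₂ i ≠ b₃ i ∧ b₂ i ≠ b₄ i ∧ b₃ i ≠ b₄ i) →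
      f (v b₁, v b₂) ≠ f (v b₃, v b₄)) :
    4 ^ K ≤ 3 ^ K *
      (Finset.image (fun b : Fin K → Fin 4 => τ (v b, v b)) Finset.univ).card := by
  have hτ : ∀ b₁ b₂ b₃ b₄ : Fin K → Fin 4,
      (∃ i : Fin K, b₁ i ≠ b₂ i ∧ b₁ i ≠ b₃ i ∧ b₁ i ≠ b₄ i ∧
        b₂ i ≠ b₃ i ∧ b₂ i ≠ b₄ i ∧ b₃ i ≠ b₄ i) →
      τ (v b₁, v b₂) ≠ τ (v b₃, v b₄) := fun b₁ b₂ b₃ b₄ hi he =>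
    hdiff b₁ b₂ b₃ b₄ hi (by simp [hf, he])
  calc 4 ^ K = #(univ : Finset (Fin K → Fin 4)) := by simp
    _ ≤ _ := card_le_mul_card_image _ _ fun c _ => card_filter_diag_eq_le v hrect hτ c

/-- The `4`-tuple rectangle argument: if a protocol-induced function `f = g ∘ τ` (where `τ`
satisfies the rectangle property) distinguishes every `4`-tuple of strings that are pairwise
different on some index, then the number of distinct diagonal transcripts `τ (v b, v b)` is at
least `4^K / 3^K`. -/
theorem four_tuple_rectangle_argument
    (K : ℕ) (hK : 0 < K) {T Γ R : Type*} [DecidableEq Γ]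
    (v : (Fin K → Fin 4) → T) (τ : T × T → Γ) (g : Γ → R)
    (f : T × T → R) (hf : f = g ∘ τ)
    (hrect : ∀ x x' y y' : T, τ (x, y) = τ (x', y') → τ (x, y') = τ (x, y))
    (hdiff : ∀ b₁ b₂ b₃ b₄ : Fin K → Fin 4,
      (∃ i : Fin K, b₁ i ≠ b₂ i ∧ b₁ i ≠ b₃ i ∧ b₁ i ≠ b₄ i ∧
        b₂ i ≠ b₃ i ∧ b₂ i ≠ b₄ i ∧ b₃ i ≠ b₄ i) →
      f (v b₁, v b₂) ≠ f (v b₃, v b₄)) :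
    4 ^ K ≤ 3 ^ K *
      (Finset.image (fun b : Fin K → Fin 4 => τ (v b, v b)) Finset.univ).card :=
  four_tuple_rectangle_argument_general K v τ g f hf hrect hdiff
end

section
/- For every integer ℓ ≥ 2 there exist a constant c > 0 and a threshold m₀ such that for all integers m ≥ m₀ there exist: an integer K with K ≥ exp(c·m); bundles G_{i,j} ⊆ Fin m for i ∈ [K], j ∈ [4] such that for every i the four bundles G_{i,1}, G_{i,2}, G_{i,3}, G_{i,4} are pairwise disjoint and their union is all of Fin m; and a family of valuations v_b on Fin m indexed by strings b ∈ [4]^K, each normalized, monotone and subadditive, such that for every b ∈ [4]^K and every i ∈ [K]: v_b(Fin m) = ℓ, v_b(G_{i,b(i)}) = ℓ − 1, and v_b((G_{i,b(i)})ᶜ) = 1. -/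
open Finset

namespace FourCell

section dd

variable {m K : ℕ} (σ : Fin m → Fin K → Fin 4) (t : ℕ) (b : Fin K → Fin 4)

/-- The set of possible "covering costs" of `S`, together with the cap `t`. -/
def DD (S : Finset (Fin m)) : Set ℕ :=
  insert t {n | ∃ I : Finset (Fin K), I.card = n ∧ ∀ e ∈ S, ∃ i ∈ I, σ e i ≠ b i}

/-- Capped covering cost. -/
noncomputable def dd (S : Finset (Fin m)) : ℕ := sInf (DD σ t b S)

lemma dd_le_witness {S : Finset (Fin m)} {I : Finset (Fin K)}
    (h : ∀ e ∈ S, ∃ i ∈ I, σ e i ≠ b i) : dd σ t b S ≤ I.card :=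
  Nat.sInf_le (Set.mem_insert_iff.mpr (Or.inr ⟨I, rfl, h⟩))

lemma dd_le_t (S : Finset (Fin m)) : dd σ t b S ≤ t := Nat.sInf_le (Set.mem_insert _ _)

lemma dd_mem (S : Finset (Fin m)) : dd σ t b S ∈ DD σ t b S :=
  Nat.sInf_mem ⟨t, Set.mem_insert _ _⟩

lemma dd_empty : dd σ t b (∅ : Finset (Fin m)) = 0 :=
  Nat.eq_zero_of_le_zero (by simpa using dd_le_witness σ t b (S := ∅) (I := ∅) (by simp))

lemma dd_mono {S T : Finset (Fin m)} (hST : S ⊆ T) : dd σ t b S ≤ dd σ t b T := by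
  rcases Set.mem_insert_iff.mp (dd_mem σ t b T) with h | ⟨I, hIc, hIw⟩
  · rw [h]; exact dd_le_t σ t b S
  · calc dd σ t b S ≤ I.card := dd_le_witness σ t b (fun e he => hIw e (hST he))
      _ = dd σ t b T := hIc

lemma dd_union_le (S T : Finset (Fin m)) :
    dd σ t b (S ∪ T) ≤ dd σ t b S + dd σ t b T := by
  rcases Set.mem_insert_iff.mp (dd_mem σ t b S) with hS | ⟨I, hIc, hIw⟩
  · exact le_trans (dd_le_t σ t b _) (by omega)
  rcases Set.mem_insert_iff.mp (dd_mem σ t b T) with hT | ⟨J, hJc, hJw⟩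
  · exact le_trans (dd_le_t σ t b _) (by omega)
  calc dd σ t b (S ∪ T) ≤ (I ∪ J).card := dd_le_witness σ t b (fun e he => by
        rcases mem_union.mp he with h | h
        · obtain ⟨i, hi, hne⟩ := hIw e h; exact ⟨i, mem_union_left _ hi, hne⟩
        · obtain ⟨i, hi, hne⟩ := hJw e h; exact ⟨i, mem_union_right _ hi, hne⟩)
    _ ≤ I.card + J.card := card_union_le _ _
    _ = _ := by omega

lemma dd_ge_one (ht : 1 ≤ t) {S : Finset (Fin m)} (hS : S.Nonempty) : 1 ≤ dd σ t b S := by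
  by_contra h
  have h0 : dd σ t b S = 0 := by omega
  rcases Set.mem_insert_iff.mp (dd_mem σ t b S) with hc | ⟨I, hIc, hIw⟩
  · omega
  · obtain ⟨e, he⟩ := hS
    have hI : I = ∅ := card_eq_zero.mp (by omega)
    obtain ⟨i, hi, -⟩ := hIw e he
    simp [hI] at hi

variable (hP : ∀ I : Finset (Fin K), I.card ≤ t → ∃ e, ∀ i ∈ I, σ e i = b i)

include hP

lemma dd_univ : dd σ t b (univ : Finset (Fin m)) = t := by
  refine le_antisymm (dd_le_t σ t b _) ?_
  by_contra h
  push_neg at h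
  rcases Set.mem_insert_iff.mp (dd_mem σ t b univ) with hc | ⟨I, hIc, hIw⟩
  · omega
  · obtain ⟨e, he⟩ := hP I (by omega)
    obtain ⟨i, hi, hne⟩ := hIw e (mem_univ e)
    exact hne (he i hi)

/-- The cell of partition `i` selected by `b` has covering cost exactly `t`. -/
lemma dd_cell (i : Fin K) :
    dd σ t b (univ.filter fun e => σ e i = b i) = t := by
  refine le_antisymm (dd_le_t σ t b _) ?_
  by_contra h
  push_neg at h
  rcases Set.mem_insert_iff.mp (dd_mem σ t b (univ.filter fun e => σ e i = b i)) with hc | ⟨I, hIc, hIw⟩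
  · omega
  · obtain ⟨e, he⟩ := hP (insert i I) (le_trans (card_insert_le _ _) (by omega))
    have hei : σ e i = b i := he i (mem_insert_self _ _)
    obtain ⟨i', hi', hne⟩ := hIw e (by simp [hei])
    exact hne (he i' (mem_insert_of_mem hi'))

lemma dd_cover {S T : Finset (Fin m)} (ht : 1 ≤ t) (hU : S ∪ T = univ)
    (hS : S ≠ univ) (hT : T ≠ univ) : t + 1 ≤ dd σ t b S + dd σ t b T := by
  have hTne : T.Nonempty := by
    rcases T.eq_empty_or_nonempty with h | h
    · exact absurd (by simpa [h] using hU) hS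
    · exact h
  have hSne : S.Nonempty := by
    rcases S.eq_empty_or_nonempty with h | h
    · exact absurd (by simpa [h] using hU) hT
    · exact h
  rcases Set.mem_insert_iff.mp (dd_mem σ t b S) with hcS | ⟨I, hIc, hIw⟩
  · have := dd_ge_one σ t b ht hTne; omega
  rcases Set.mem_insert_iff.mp (dd_mem σ t b T) with hcT | ⟨J, hJc, hJw⟩
  · have := dd_ge_one σ t b ht hSne; omega
  by_contra h
  push_neg at h
  have hcard : (I ∪ J).card ≤ t := le_trans (card_union_le _ _) (by omega)
  obtain ⟨e, he⟩ := hP (I ∪ J) hcard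
  have he' : e ∈ S ∪ T := by rw [hU]; exact mem_univ e
  rcases mem_union.mp he' with hmem | hmem
  · obtain ⟨i, hi, hne⟩ := hIw e hmem
    exact hne (he i (mem_union_left _ hi))
  · obtain ⟨i, hi, hne⟩ := hJw e hmem
    exact hne (he i (mem_union_right _ hi))

end dd

end FourCell


open Finset

namespace FourCell3

/-- Functions constrained on the range of an injection. -/
noncomputable def constrEquiv {t K : ℕ} (ι : Fin t ↪ Fin K) (p : Fin t → Fin 4) :
    {r : Fin K → Fin 4 // ∀ s, r (ι s) = p s} ≃ ({x : Fin K // x ∉ Set.range ι} → Fin 4) where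
  toFun r x := r.1 x.1
  invFun g := ⟨fun x => if h : x ∈ Set.range ι then p h.choose else g ⟨x, h⟩, by
    intro s
    have h : (ι s) ∈ Set.range ι := ⟨s, rfl⟩
    simp only [dif_pos h]
    congr 1
    exact ι.injective h.choose_spec⟩
  left_inv r := Subtype.ext (funext fun x => by
    by_cases h : x ∈ Set.range ι
    · simp only [dif_pos h]
      rw [← r.2 h.choose, h.choose_spec]
    · simp only [dif_neg h])
  right_inv g := funext fun x => by
    simp only [dif_neg x.2]

lemma card_compl_range {t K : ℕ} (ι : Fin t ↪ Fin K) :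
    Fintype.card {x : Fin K // x ∉ Set.range ⇑ι} = K - t := by
  classical
  have h1 : Fintype.card {x : Fin K // x ∈ Set.range ⇑ι} = t := by
    have := Set.card_range_of_injective ι.injective
    rw [Fintype.card_fin] at this
    exact (Fintype.card_eq.mpr ⟨Equiv.refl _⟩).trans this
  have h2 := Fintype.card_subtype_compl (fun x : Fin K => x ∈ Set.range ⇑ι)
  rw [h1, Fintype.card_fin] at h2
  convert h2 using 2

lemma card_constrained {t K : ℕ} (ι : Fin t ↪ Fin K) (p : Fin t → Fin 4) :
    Fintype.card {r : Fin K → Fin 4 // ∀ s, r (ι s) = p s} = 4 ^ (K - t) := by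
  classical
  rw [Fintype.card_congr (constrEquiv ι p), Fintype.card_fun, card_compl_range,
    Fintype.card_fin]

lemma card_rowbad {t K : ℕ} (ι : Fin t ↪ Fin K) (p : Fin t → Fin 4) :
    Fintype.card {r : Fin K → Fin 4 // ∃ s, r (ι s) ≠ p s} = 4 ^ K - 4 ^ (K - t) := by
  have hequiv : {r : Fin K → Fin 4 // ∃ s, r (ι s) ≠ p s} ≃
      {r : Fin K → Fin 4 // ¬ ∀ s, r (ι s) = p s} :=
    Equiv.subtypeEquivRight (fun r => by push_neg; rfl)
  rw [Fintype.card_congr hequiv, Fintype.card_subtype_compl, card_constrained,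
    Fintype.card_fun, Fintype.card_fin, Fintype.card_fin]

lemma exists_good (t K m : ℕ) (htK : t ≤ K) (ht : 1 ≤ t)
    (hcount : ((4 : ℕ) ^ K) ^ m > K ^ t * 4 ^ t * (4 ^ K - 4 ^ (K - t)) ^ m) :
    ∃ σ : Fin m → Fin K → Fin 4,
      ∀ (b : Fin K → Fin 4) (I : Finset (Fin K)), I.card ≤ t →
        ∃ e, ∀ i ∈ I, σ e i = b i := by
  classical
  by_contra hno
  push_neg at hno
  set E : (Fin t ↪ Fin K) × (Fin t → Fin 4) → Finset (Fin m → Fin K → Fin 4) :=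
    fun j => univ.filter (fun σ => ∀ e : Fin m, ∃ s : Fin t, σ e (j.1 s) ≠ j.2 s) with hE
  have cover : (univ : Finset (Fin m → Fin K → Fin 4)) ⊆ univ.biUnion E := by
    intro σ hσ
    obtain ⟨b, I, hIcard, hfail⟩ := hno σ
    obtain ⟨I', hII', hI'card⟩ := Finset.exists_superset_card_eq hIcard
      (by simpa using htK)
    let f := I'.orderIsoOfFin hI'card
    let ι : Fin t ↪ Fin K := f.toEquiv.toEmbedding.trans (Function.Embedding.subtype _)
    refine Finset.mem_biUnion.mpr ⟨(ι, fun s => b (ι s)), mem_univ _, ?_⟩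
    rw [hE, mem_filter]
    refine ⟨mem_univ _, fun e => ?_⟩
    dsimp only
    obtain ⟨i, hi, hne⟩ := hfail e
    have hiI' : i ∈ I' := hII' hi
    refine ⟨f.symm ⟨i, hiI'⟩, ?_⟩
    have hfi : ι (f.symm ⟨i, hiI'⟩) = i := by
      simp [ι, Function.Embedding.subtype]
      rfl
    rw [hfi]
    exact hne
  have hEcard : ∀ j, (E j).card = (4 ^ K - 4 ^ (K - t)) ^ m := by
    intro j
    rw [hE]
    rw [← Fintype.card_subtype]
    rw [Fintype.card_congr
      (Equiv.subtypePiEquivPi (p := fun (_ : Fin m) (r : Fin K → Fin 4) =>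
        ∃ s : Fin t, r (j.1 s) ≠ j.2 s))]
    rw [Fintype.card_fun, Fintype.card_fin, card_rowbad]
  have hcardJ : Fintype.card ((Fin t ↪ Fin K) × (Fin t → Fin 4)) ≤ K ^ t * 4 ^ t := by
    rw [Fintype.card_prod, Fintype.card_fun, Fintype.card_fin, Fintype.card_fin,
      Fintype.card_embedding_eq, Fintype.card_fin, Fintype.card_fin]
    exact Nat.mul_le_mul_right _ (Nat.descFactorial_le_pow _ _)
  have hbig : ((4 : ℕ) ^ K) ^ m ≤ K ^ t * 4 ^ t * (4 ^ K - 4 ^ (K - t)) ^ m := by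
    calc ((4 : ℕ) ^ K) ^ m = Fintype.card (Fin m → Fin K → Fin 4) := by
          rw [Fintype.card_fun, Fintype.card_fun, Fintype.card_fin, Fintype.card_fin,
            Fintype.card_fin]
      _ = (univ : Finset (Fin m → Fin K → Fin 4)).card := Finset.card_univ.symm
      _ ≤ (univ.biUnion E).card := Finset.card_le_card cover
      _ ≤ ∑ j : (Fin t ↪ Fin K) × (Fin t → Fin 4), (E j).card := Finset.card_biUnion_le
      _ = ∑ _j : (Fin t ↪ Fin K) × (Fin t → Fin 4), (4 ^ K - 4 ^ (K - t)) ^ m :=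
          Finset.sum_congr rfl (fun j _ => hEcard j)
      _ = Fintype.card ((Fin t ↪ Fin K) × (Fin t → Fin 4)) * (4 ^ K - 4 ^ (K - t)) ^ m := by
          rw [Finset.sum_const, card_univ, smul_eq_mul]
      _ ≤ K ^ t * 4 ^ t * (4 ^ K - 4 ^ (K - t)) ^ m :=
          Nat.mul_le_mul_right _ hcardJ
  omega

end FourCell3


open Finset

namespace FourCell4

lemma exists_CA (t : ℕ) (ht : 1 ≤ t) :
    ∃ c : ℝ, 0 < c ∧ ∃ m₀ : ℕ, ∀ m : ℕ, m₀ ≤ m →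
      ∃ K : ℕ, Real.exp (c * m) ≤ (K : ℝ) ∧ t ≤ K ∧ 1 ≤ m ∧
        ∃ σ : Fin m → Fin K → Fin 4,
          ∀ (b : Fin K → Fin 4) (I : Finset (Fin K)), I.card ≤ t →
            ∃ e, ∀ i ∈ I, σ e i = b i := by
  set ε : ℝ := ((4:ℝ) ^ t)⁻¹ with hε
  have hεpos : 0 < ε := by positivity
  have hεle : ε ≤ 1 := by
    rw [hε]
    rw [inv_le_one_iff₀]
    right
    exact one_le_pow₀ (by norm_num)
  set c : ℝ := ε / (2 * t) with hc
  have hcpos : 0 < c := by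
    apply div_pos hεpos
    positivity
  refine ⟨c, hcpos, ⌈Real.log (9 * (t + 2)) / c⌉₊ + 1, ?_⟩
  intro m hm
  set K : ℕ := t + 1 + ⌈Real.exp (c * m)⌉₊ with hK
  have hm1 : 1 ≤ m := by omega
  have htK : t ≤ K := by omega
  have hKge : Real.exp (c * m) ≤ (K : ℝ) := by
    calc Real.exp (c * m) ≤ (⌈Real.exp (c * m)⌉₊ : ℝ) := Nat.le_ceil _
      _ ≤ (K : ℝ) := by
          rw [hK]
          push_cast
          linarith [Nat.cast_nonneg (α := ℝ) t]
  refine ⟨K, hKge, htK, hm1, ?_⟩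
  apply FourCell3.exists_good t K m htK ht
  -- numeric inequality
  set X : ℝ := Real.exp (c * m) with hX
  have hX1 : 1 ≤ X := Real.one_le_exp (by positivity)
  have hXbig : 9 * ((t : ℝ) + 2) ≤ X := by
    rw [hX]
    rw [← Real.exp_log (show (0:ℝ) < 9 * ((t:ℝ) + 2) by positivity)]
    apply Real.exp_le_exp.mpr
    have h1 : Real.log (9 * ((t:ℝ) + 2)) / c ≤ (⌈Real.log (9 * (t + 2)) / c⌉₊ : ℝ) := by
      push_cast
      exact Nat.le_ceil _
    have h2 : (⌈Real.log (9 * (t + 2)) / c⌉₊ : ℝ) + 1 ≤ (m : ℝ) := by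
      exact_mod_cast hm
    have h3 : Real.log (9 * ((t:ℝ) + 2)) / c ≤ (m : ℝ) := by
      push_cast at h1 ⊢
      linarith
    calc Real.log (9 * ((t:ℝ) + 2)) = c * (Real.log (9 * ((t:ℝ) + 2)) / c) := by
          field_simp
      _ ≤ c * m := by
          apply mul_le_mul_of_nonneg_left h3 hcpos.le
  have hKle : (K : ℝ) ≤ X + (t : ℝ) + 2 := by
    rw [hK]
    push_cast
    have h := Nat.ceil_lt_add_one (Real.exp_pos (c * m)).le
    linarith
  -- the key real inequality
  have hkey : (K:ℝ) ^ t * 4 ^ t * ((4:ℝ) ^ t - 1) ^ m < ((4:ℝ) ^ t) ^ m := by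
    -- first: K^t * 4^t < X^(2*t)
    have h4 : 4 * ((X + (t:ℝ) + 2)) < X ^ 2 := by
      nlinarith [hX1, hXbig, Nat.cast_nonneg (α := ℝ) t]
    have h5 : (K:ℝ) ^ t * 4 ^ t < X ^ (2 * t) := by
      have hKnn : (0:ℝ) ≤ (K:ℝ) := Nat.cast_nonneg _
      calc (K:ℝ) ^ t * 4 ^ t = ((K:ℝ) * 4) ^ t := by rw [mul_pow]
        _ ≤ ((X + (t:ℝ) + 2) * 4) ^ t := by
            apply pow_le_pow_left₀ (by positivity)
            nlinarith
        _ < (X ^ 2) ^ t := by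
            apply pow_lt_pow_left₀ (by nlinarith) (by positivity)
            omega
        _ = X ^ (2 * t) := by rw [← pow_mul, mul_comm]
    -- second: (4^t - 1)^m ≤ (4^t)^m * exp (-ε*m)
    have h6 : ((4:ℝ) ^ t - 1) ^ m ≤ ((4:ℝ) ^ t) ^ m * Real.exp (-(ε * m)) := by
      have h1e : (4:ℝ) ^ t - 1 = (4:ℝ) ^ t * (1 - ε) := by
        rw [hε]
        field_simp
      rw [h1e, mul_pow, mul_comm ε (m:ℝ)]
      apply mul_le_mul_of_nonneg_left _ (by positivity)
      calc (1 - ε) ^ m ≤ (Real.exp (-ε)) ^ m := by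
            apply pow_le_pow_left₀ (by linarith)
            linarith [Real.add_one_le_exp (-ε)]
        _ = Real.exp (-((m:ℝ) * ε)) := by
            rw [← Real.exp_nat_mul]
            ring_nf
      -- done
    -- third: X^(2*t) * exp(-(ε*m)) = 1
    have h7 : X ^ (2 * t) * Real.exp (-(ε * m)) = 1 := by
      rw [hX, ← Real.exp_nat_mul, ← Real.exp_add]
      rw [← Real.exp_zero]
      congr 1
      rw [hc]
      push_cast
      field_simp
      ring
    calc (K:ℝ) ^ t * 4 ^ t * ((4:ℝ) ^ t - 1) ^ m
        ≤ (K:ℝ) ^ t * 4 ^ t * (((4:ℝ) ^ t) ^ m * Real.exp (-(ε * m))) := by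
          apply mul_le_mul_of_nonneg_left h6 (by positivity)
      _ < X ^ (2 * t) * (((4:ℝ) ^ t) ^ m * Real.exp (-(ε * m))) := by
          apply mul_lt_mul_of_pos_right h5 (by positivity)
      _ = (X ^ (2 * t) * Real.exp (-(ε * m))) * ((4:ℝ) ^ t) ^ m := by ring
      _ = ((4:ℝ) ^ t) ^ m := by rw [h7, one_mul]
  -- convert to the natural-number inequality
  have h4pow : (4:ℕ) ^ (K - t) ≤ 4 ^ K := Nat.pow_le_pow_right (by norm_num) (Nat.sub_le _ _)
  rw [gt_iff_lt, ← Nat.cast_lt (α := ℝ)]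
  push_cast [Nat.cast_sub h4pow]
  have hsplitR : (4:ℝ) ^ K = 4 ^ (K - t) * 4 ^ t := by
    rw [← pow_add]
    congr 1
    omega
  have e1 : ((4:ℝ) ^ K - 4 ^ (K - t)) = 4 ^ (K - t) * ((4:ℝ) ^ t - 1) := by
    rw [hsplitR]; ring
  rw [e1, mul_pow, hsplitR, mul_pow]
  have hApos : (0:ℝ) < ((4:ℝ) ^ (K - t)) ^ m := by positivity
  nlinarith [hkey, hApos, mul_lt_mul_of_pos_left hkey hApos]

end FourCell4


open Finset

namespace FourCell2

lemma valuation_construction (ℓ m K : ℕ) (hℓ : 2 ≤ ℓ) (hm : 1 ≤ m)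
    (σ : Fin m → Fin K → Fin 4)
    (P : ∀ (b : Fin K → Fin 4) (I : Finset (Fin K)), I.card ≤ ℓ - 1 →
      ∃ e, ∀ i ∈ I, σ e i = b i) :
    ∃ G : Fin K → Fin 4 → Finset (Fin m),
      (∀ i : Fin K, ∀ j j' : Fin 4, j ≠ j' → Disjoint (G i j) (G i j')) ∧
      (∀ i : Fin K, Finset.univ.sup (G i) = (Finset.univ : Finset (Fin m))) ∧
      ∃ v : (Fin K → Fin 4) → Finset (Fin m) → ℝ,
        (∀ b, v b ∅ = 0) ∧
        (∀ b, ∀ S T : Finset (Fin m), S ⊆ T → v b S ≤ v b T) ∧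
        (∀ b, ∀ S T : Finset (Fin m), v b (S ∪ T) ≤ v b S + v b T) ∧
        (∀ b, v b (Finset.univ : Finset (Fin m)) = (ℓ : ℝ)) ∧
        (∀ b, ∀ i : Fin K, v b (G i (b i)) = (ℓ : ℝ) - 1) ∧
        (∀ b, ∀ i : Fin K, v b ((G i (b i))ᶜ) = 1) := by
  have : NeZero m := ⟨by omega⟩
  set t := ℓ - 1 with ht_def
  have ht : 1 ≤ t := by omega
  refine ⟨fun i j => univ.filter fun e => σ e i = j, ?_, ?_, ?_⟩
  · intro i j j' hjj'
    rw [Finset.disjoint_left]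
    intro e he he'
    rw [mem_filter] at he he'
    exact hjj' (he.2 ▸ he'.2 ▸ rfl)
  · intro i
    apply Finset.eq_univ_of_forall
    intro e
    rw [Finset.mem_sup]
    exact ⟨σ e i, mem_univ _, by simp⟩
  refine ⟨fun b S => (if S = univ then (1:ℝ) else 0) + (FourCell.dd σ t b S : ℝ),
    ?_, ?_, ?_, ?_, ?_, ?_⟩
  · intro b
    dsimp only
    rw [if_neg, FourCell.dd_empty]
    · simp
    · intro h
      exact (Finset.univ_nonempty (α := Fin m)).ne_empty h.symm
  · intro b S T hST
    dsimp only
    have h1 : (if S = univ then (1:ℝ) else 0) ≤ (if T = univ then (1:ℝ) else 0) := by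
      by_cases hS : S = univ
      · have hT : T = univ := Finset.univ_subset_iff.mp (hS ▸ hST)
        simp [hS, hT]
      · simp only [if_neg hS]
        positivity
    have h2 : (FourCell.dd σ t b S : ℝ) ≤ FourCell.dd σ t b T := by
      exact_mod_cast FourCell.dd_mono σ t b hST
    linarith
  · intro b S T
    dsimp only
    by_cases hU : S ∪ T = univ
    · by_cases hS : S = univ
      · have hST : S ∪ T = S := by rw [hS]; simp
        rw [hST]
        have : (0:ℝ) ≤ (if T = univ then (1:ℝ) else 0) + (FourCell.dd σ t b T : ℝ) := by
          positivity
        linarith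
      · by_cases hT : T = univ
        · have hST : S ∪ T = T := by rw [hT]; simp
          rw [hST]
          have : (0:ℝ) ≤ (if S = univ then (1:ℝ) else 0) + (FourCell.dd σ t b S : ℝ) := by
            positivity
          linarith
        · rw [hU, if_pos rfl, if_neg hS, if_neg hT, FourCell.dd_univ σ t b (P b)]
          have := FourCell.dd_cover σ t b (P b) ht hU hS hT
          have hcast : (t:ℝ) + 1 ≤ (FourCell.dd σ t b S : ℝ) + (FourCell.dd σ t b T : ℝ) := by
            exact_mod_cast this
          linarith
    · rw [if_neg hU]
      have := FourCell.dd_union_le σ t b S T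
      have hcast : (FourCell.dd σ t b (S ∪ T) : ℝ) ≤
          (FourCell.dd σ t b S : ℝ) + (FourCell.dd σ t b T : ℝ) := by exact_mod_cast this
      have h1 : (0:ℝ) ≤ (if S = univ then (1:ℝ) else 0) := by positivity
      have h2 : (0:ℝ) ≤ (if T = univ then (1:ℝ) else 0) := by positivity
      linarith
  · intro b
    dsimp only
    rw [if_pos rfl, FourCell.dd_univ σ t b (P b)]
    have : ((t:ℝ)) = (ℓ:ℝ) - 1 := by
      rw [ht_def]
      push_cast [Nat.cast_sub (by omega : 1 ≤ ℓ)]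
      ring
    linarith
  · intro b i
    dsimp only
    have hne : (univ.filter fun e => σ e i = b i) ≠ univ := by
      obtain ⟨c, hc⟩ := exists_ne (b i)
      obtain ⟨e, he⟩ := P (fun _ => c) {i} (by simp [ht])
      intro h
      have h2 : e ∈ univ.filter fun e' => σ e' i = b i := by rw [h]; exact mem_univ e
      rw [mem_filter] at h2
      exact hc (by rw [← he i (mem_singleton_self i), h2.2])
    rw [if_neg hne, FourCell.dd_cell σ t b (P b) i]
    rw [ht_def]
    push_cast [Nat.cast_sub (by omega : 1 ≤ ℓ)]
    ring
  · intro b i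
    dsimp only
    obtain ⟨e, he⟩ := P b {i} (by simp [ht])
    have heG : e ∈ univ.filter fun e => σ e i = b i :=
      mem_filter.mpr ⟨mem_univ e, he i (mem_singleton_self i)⟩
    have hne : ((univ.filter fun e => σ e i = b i)ᶜ : Finset (Fin m)) ≠ univ := by
      intro h
      have h2 : e ∈ (univ.filter fun e' => σ e' i = b i)ᶜ := by rw [h]; exact mem_univ e
      rw [Finset.mem_compl] at h2
      exact h2 heG
    have hd : FourCell.dd σ t b ((univ.filter fun e => σ e i = b i)ᶜ) = 1 := by
      refine le_antisymm ?_ ?_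
      · have := FourCell.dd_le_witness σ t b
          (S := (univ.filter fun e => σ e i = b i)ᶜ) (I := {i}) ?_
        · simpa using this
        · intro e' he'
          rw [Finset.mem_compl, mem_filter] at he'
          exact ⟨i, mem_singleton_self i, fun h => he' ⟨mem_univ e', h⟩⟩
      · refine FourCell.dd_ge_one σ t b ht ?_
        obtain ⟨c, hc⟩ := exists_ne (b i)
        obtain ⟨e', he'⟩ := P (fun _ => c) {i} (by simp [ht])
        refine ⟨e', ?_⟩
        rw [Finset.mem_compl, mem_filter]
        rintro ⟨-, h⟩
        exact hc (by rw [← he' i (mem_singleton_self i), h])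
    rw [if_neg hne, hd]
    norm_num

end FourCell2

/-- For every integer `ℓ ≥ 2` there exist `c > 0` and a threshold `m₀` such that for all
`m ≥ m₀` there are `K ≥ exp (c m)` four-cell partitions `G i 0, …, G i 3` of `Fin m` and a
family of normalized, monotone, subadditive valuations `v b` indexed by strings
`b : Fin K → Fin 4` with `v b univ = ℓ`, `v b (G i (b i)) = ℓ - 1`, and
`v b (G i (b i))ᶜ = 1` for all `b` and `i`. -/
theorem exists_four_cell_partition_valuations (ℓ : ℕ) (hℓ : 2 ≤ ℓ) :
    ∃ c : ℝ, 0 < c ∧ ∃ m₀ : ℕ, ∀ m : ℕ, m₀ ≤ m →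
      ∃ K : ℕ, Real.exp (c * m) ≤ (K : ℝ) ∧
        ∃ G : Fin K → Fin 4 → Finset (Fin m),
          (∀ i : Fin K, ∀ j j' : Fin 4, j ≠ j' → Disjoint (G i j) (G i j')) ∧
          (∀ i : Fin K, Finset.univ.sup (G i) = (Finset.univ : Finset (Fin m))) ∧
          ∃ v : (Fin K → Fin 4) → Finset (Fin m) → ℝ,
            (∀ b, v b ∅ = 0) ∧
            (∀ b, ∀ S T : Finset (Fin m), S ⊆ T → v b S ≤ v b T) ∧
            (∀ b, ∀ S T : Finset (Fin m), v b (S ∪ T) ≤ v b S + v b T) ∧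
            (∀ b, v b (Finset.univ : Finset (Fin m)) = (ℓ : ℝ)) ∧
            (∀ b, ∀ i : Fin K, v b (G i (b i)) = (ℓ : ℝ) - 1) ∧
            (∀ b, ∀ i : Fin K, v b ((G i (b i))ᶜ) = 1) := by
  obtain ⟨c, hc, m₀, hCA⟩ := FourCell4.exists_CA (ℓ - 1) (by omega)
  refine ⟨c, hc, m₀, ?_⟩
  intro m hm
  obtain ⟨K, hK, htK, hm1, σ, P⟩ := hCA m hm
  exact ⟨K, hK, FourCell2.valuation_construction ℓ m K hℓ hm1 σ P⟩
end

section
/- (Menu monotonicity) Let (f, p₁,…,pₙ) be a truthful n-bidder auction rule over valuation classes V₁,…,Vₙ, where every valuation in every V_i is normalized and monotone. Then there exist payment functions p'₁,…,p'ₙ such that (f, p'₁,…,p'ₙ) is truthful and, for every bidder i and every profile v_{-i}, there is a function M : Finset (Fin m) → ℝ that is nondecreasing (M(S) ≤ M(T) whenever S ⊆ T), satisfies M(∅) = 0, and satisfies p'_i(v_i, v_{-i}) = M(f_i(v_i, v_{-i})) for every v_i ∈ V_i. -/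
/-!
Fix bidder `i` and the others' valuations. Truthfulness against a monotone valuation forces the
payment to be monotone in the allocated bundle: a report that wins a larger bundle cannot pay
less. In particular the payment depends on the bundle only, so it takes finitely many values.
Subtracting its least value (which depends on the others' reports only, hence keeps
truthfulness) and extending upwards by taking maxima over smaller bundles gives the menu.
-/

open Function

section Menu

variable {α β : Type*} [Preorder β]

/-- The least nonnegative monotone extension to all of `β` of the price `q - inf q`, which
truthfulness makes a monotone function of the allocated bundle `g a`. -/
noncomputable def menu (s : Set α) (g : α → β) (q : α → ℝ) (b : β) : ℝ :=
  sSup (insert 0 ((fun a => q a - sInf (q '' s)) '' {a ∈ s | g a ≤ b}))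

variable {s : Set α} {g : α → β} {q : α → ℝ}

theorem finite_image_of_le_imp_le [Finite β] (hq : ∀ a ∈ s, ∀ b ∈ s, g a ≤ g b → q a ≤ q b) :
    (q '' s).Finite := by
  have hfiber : ∀ b : β, (q '' {a ∈ s | g a = b}).Subsingleton := by
    rintro b _ ⟨a, ⟨ha, rfl⟩, rfl⟩ _ ⟨a', ⟨ha', hg⟩, rfl⟩
    exact le_antisymm (hq a ha a' ha' hg.ge) (hq a' ha' a ha hg.le)
  refine (Set.finite_iUnion fun b => (hfiber b).finite).subset ?_
  rintro _ ⟨a, ha, rfl⟩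
  exact Set.mem_iUnion.2 ⟨g a, a, ⟨ha, rfl⟩, rfl⟩

theorem bddAbove_menu_set [Finite β] (hq : ∀ a ∈ s, ∀ b ∈ s, g a ≤ g b → q a ≤ q b) (b : β) :
    BddAbove (insert 0 ((fun a => q a - sInf (q '' s)) '' {a ∈ s | g a ≤ b})) := by
  refine (((finite_image_of_le_imp_le hq).image (· - sInf (q '' s))).insert 0).bddAbove.mono ?_
  rintro _ (rfl | ⟨a, ⟨ha, -⟩, rfl⟩)
  · exact Set.mem_insert _ _
  · exact Set.mem_insert_of_mem _ ⟨q a, ⟨a, ha, rfl⟩, rfl⟩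

theorem monotone_menu [Finite β] (hq : ∀ a ∈ s, ∀ b ∈ s, g a ≤ g b → q a ≤ q b) :
    Monotone (menu s g q) := by
  intro b c hbc
  refine csSup_le_csSup (bddAbove_menu_set hq c) (Set.insert_nonempty _ _) ?_
  exact Set.insert_subset_insert
    (Set.image_mono fun a ⟨ha, hab⟩ => ⟨ha, hab.trans hbc⟩)

theorem menu_apply [Finite β] (hq : ∀ a ∈ s, ∀ b ∈ s, g a ≤ g b → q a ≤ q b) {a : α}
    (ha : a ∈ s) : menu s g q (g a) = q a - sInf (q '' s) := by
  have hinf : sInf (q '' s) ≤ q a :=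
    csInf_le (finite_image_of_le_imp_le hq).bddBelow ⟨a, ha, rfl⟩
  refine le_antisymm (csSup_le (Set.insert_nonempty _ _) ?_) ?_
  · rintro _ (rfl | ⟨a', ⟨ha', hle⟩, rfl⟩)
    · linarith
    · linarith [hq a' ha' a ha hle]
  · exact le_csSup (bddAbove_menu_set hq _) (Set.mem_insert_of_mem _ ⟨a, ⟨ha, le_rfl⟩, rfl⟩)

theorem menu_bot [OrderBot β] [Finite β] (hq : ∀ a ∈ s, ∀ b ∈ s, g a ≤ g b → q a ≤ q b) :
    menu s g q ⊥ = 0 := by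
  refine le_antisymm (csSup_le (Set.insert_nonempty _ _) ?_) ?_
  · rintro _ (rfl | ⟨a, ⟨ha, hbot⟩, rfl⟩)
    · exact le_rfl
    · exact sub_nonpos.2 <| le_csInf ⟨q a, a, ha, rfl⟩
        fun _ ⟨b, hb, hqb⟩ => hqb ▸ hq a ha b hb (hbot.trans bot_le)
  · exact le_csSup (bddAbove_menu_set hq ⊥) (Set.mem_insert 0 _)

end Menu

theorem payment_mono_of_truthful {β : Type*} [Preorder β] {s : Set (β → ℝ)}
    (hs : ∀ v ∈ s, Monotone v) {g : (β → ℝ) → β} {q : (β → ℝ) → ℝ}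
    (htruth : ∀ v ∈ s, ∀ v' ∈ s, v (g v') - q v' ≤ v (g v) - q v) :
    ∀ v ∈ s, ∀ v' ∈ s, g v ≤ g v' → q v ≤ q v' := fun v hv v' hv' hle => by
  linarith [htruth v hv v' hv', hs v hv hle]

noncomputable def minPayment {ι γ : Type*} [DecidableEq ι] (V : ι → Set γ)
    (p : ι → (ι → γ) → ℝ) (i : ι) (v : ι → γ) : ℝ :=
  sInf ((fun w => p i (update v i w)) '' V i)

theorem minPayment_update {ι γ : Type*} [DecidableEq ι] (V : ι → Set γ)
    (p : ι → (ι → γ) → ℝ) (i : ι) (v : ι → γ) (w : γ) :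
    minPayment V p i (update v i w) = minPayment V p i v := by
  simp only [minPayment, update_idem]

theorem menu_monotonicity_general
    (m n : ℕ) (V : Fin n → Set (Finset (Fin m) → ℝ))
    (hV : ∀ i : Fin n, ∀ v ∈ V i,
      v ∅ = 0 ∧ ∀ S T : Finset (Fin m), S ⊆ T → v S ≤ v T)
    (f : (Fin n → Finset (Fin m) → ℝ) → Fin n → Finset (Fin m))
    (p : Fin n → (Fin n → Finset (Fin m) → ℝ) → ℝ)
    (htruth : ∀ v : Fin n → Finset (Fin m) → ℝ, (∀ j, v j ∈ V j) →
      ∀ i : Fin n, ∀ v' ∈ V i,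
        v i (f v i) - p i v ≥
          v i (f (Function.update v i v') i) - p i (Function.update v i v')) :
    ∃ p' : Fin n → (Fin n → Finset (Fin m) → ℝ) → ℝ,
      (∀ v : Fin n → Finset (Fin m) → ℝ, (∀ j, v j ∈ V j) →
        ∀ i : Fin n, ∀ v' ∈ V i,
          v i (f v i) - p' i v ≥
            v i (f (Function.update v i v') i) - p' i (Function.update v i v')) ∧
      (∀ i : Fin n, ∀ v : Fin n → Finset (Fin m) → ℝ, (∀ j, v j ∈ V j) →
        ∃ M : Finset (Fin m) → ℝ,
          (∀ S T : Finset (Fin m), S ⊆ T → M S ≤ M T) ∧ M ∅ = 0 ∧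
          ∀ vi' ∈ V i,
            p' i (Function.update v i vi') = M (f (Function.update v i vi') i)) := by
  have hmono : ∀ i v, (∀ j, v j ∈ V j) → ∀ w ∈ V i, ∀ w' ∈ V i,
      f (update v i w) i ≤ f (update v i w') i → p i (update v i w) ≤ p i (update v i w') :=
    fun i v hv => payment_mono_of_truthful (fun w hw _ _ hST => (hV i w hw).2 _ _ hST)
      fun w hw w' hw' => by
        have hvalid : ∀ j, update v i w j ∈ V j := forall_update_iff _ _ |>.2 ⟨hw, fun j _ => hv j⟩
        simpa using htruth (update v i w) hvalid i w' hw'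
  refine ⟨fun i v => p i v - minPayment V p i v, fun v hv i v' hv' => ?_, fun i v hv => ?_⟩
  · simp only [minPayment_update]
    linarith [htruth v hv i v' hv']
  · refine ⟨menu (V i) (fun w => f (update v i w) i) (fun w => p i (update v i w)),
      fun S T hST => monotone_menu (hmono i v hv) hST, menu_bot (hmono i v hv), fun w hw => ?_⟩
    rw [menu_apply (hmono i v hv) hw]
    exact congrArg (_ - ·) (minPayment_update V p i v w)

/-- **Menu monotonicity.** For any truthful `n`-bidder auction rule `(f, p)` over classes of
normalized monotone valuations, there exist payments `p'` such that `(f, p')` is truthful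
and, for every bidder `i` and every profile of the other bidders' valuations, the payments
of bidder `i` are given by a nondecreasing normalized menu of the allocated bundle. -/
theorem menu_monotonicity
    (m n : ℕ) (V : Fin n → Set (Finset (Fin m) → ℝ))
    (hV : ∀ i : Fin n, ∀ v ∈ V i,
      v ∅ = 0 ∧ ∀ S T : Finset (Fin m), S ⊆ T → v S ≤ v T)
    (f : (Fin n → Finset (Fin m) → ℝ) → Fin n → Finset (Fin m))
    (p : Fin n → (Fin n → Finset (Fin m) → ℝ) → ℝ)
    (hdisj : ∀ v : Fin n → Finset (Fin m) → ℝ, (∀ j, v j ∈ V j) →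
      ∀ i j : Fin n, i ≠ j → Disjoint (f v i) (f v j))
    (htruth : ∀ v : Fin n → Finset (Fin m) → ℝ, (∀ j, v j ∈ V j) →
      ∀ i : Fin n, ∀ v' ∈ V i,
        v i (f v i) - p i v ≥
          v i (f (Function.update v i v') i) - p i (Function.update v i v')) :
    ∃ p' : Fin n → (Fin n → Finset (Fin m) → ℝ) → ℝ,
      (∀ v : Fin n → Finset (Fin m) → ℝ, (∀ j, v j ∈ V j) →
        ∀ i : Fin n, ∀ v' ∈ V i,
          v i (f v i) - p' i v ≥
            v i (f (Function.update v i v') i) - p' i (Function.update v i v')) ∧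
      (∀ i : Fin n, ∀ v : Fin n → Finset (Fin m) → ℝ, (∀ j, v j ∈ V j) →
        ∃ M : Finset (Fin m) → ℝ,
          (∀ S T : Finset (Fin m), S ⊆ T → M S ≤ M T) ∧ M ∅ = 0 ∧
          ∀ vi' ∈ V i,
            p' i (Function.update v i vi') = M (f (Function.update v i vi') i)) :=
  menu_monotonicity_general m n V hV f p htruth
end

section
/- Let ℓ be a positive integer and let S be an ℓ-sparse finite collection of bundles of Fin m. Then the function v_S^ℓ is normalized (v_S^ℓ(∅) = 0), monotone (v_S^ℓ(X) ≤ v_S^ℓ(Y) whenever X ⊆ Y), and subadditive (v_S^ℓ(X ∪ Y) ≤ v_S^ℓ(X) + v_S^ℓ(Y) for all bundles X, Y). -/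
/-- The cover number `σ_S(X)`: the least number of members of the collection `S` needed to
cover `X`, if `X` is contained in the union of all members, and `max ℓ d` otherwise (where
`d` is the number of members). -/
noncomputable def coverNum (m ℓ : ℕ) {ι : Type*} [Fintype ι]
    (S : ι → Finset (Fin m)) (X : Finset (Fin m)) : ℕ :=
  if X ⊆ Finset.univ.sup S then
    sInf {n | ∃ Y : Finset ι, X ⊆ Y.sup S ∧ Y.card = n}
  else max ℓ (Fintype.card ι)

/-- The modified set-cover valuation `v_S^ℓ`. -/
noncomputable def vSl (m ℓ : ℕ) {ι : Type*} [Fintype ι]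
    (S : ι → Finset (Fin m)) (X : Finset (Fin m)) : ℝ :=
  if (coverNum m ℓ S X : ℝ) < (ℓ : ℝ) / 2 then (coverNum m ℓ S X : ℝ)
  else if (coverNum m ℓ S Xᶜ : ℝ) < (ℓ : ℝ) / 2 then (ℓ : ℝ) - (coverNum m ℓ S Xᶜ : ℝ)
  else (ℓ : ℝ) / 2

/-!
Write `σ` for the cover number. It is monotone and subadditive along covers `X ⊆ Y ∪ Z`, and
sparsity gives `ℓ ≤ σ(X) + σ(Xᶜ)`, since covers of `X` and of `Xᶜ` together cover everything.
Under that inequality the three cases defining `v_S^ℓ(X)` collapse to the single formula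
`min σ(X) (max (ℓ - σ(Xᶜ)) (ℓ/2))`, and monotonicity and subadditivity of this expression follow
from those of `σ` by elementary inequalities.
-/

noncomputable def clampedCover (L a b : ℝ) : ℝ := min a (max (L - b) (L / 2))

lemma clampedCover_mono {L a a' b b' : ℝ} (ha : a ≤ a') (hb : b' ≤ b) :
    clampedCover L a b ≤ clampedCover L a' b' :=
  min_le_min ha (max_le_max (by linarith) le_rfl)

lemma clampedCover_le_add {L u u' a a' b b' : ℝ} (hL : 0 ≤ L) (ha : 0 ≤ a) (hb : 0 ≤ b)
    (hu' : 0 ≤ u') (hu : u ≤ a + b) (ha' : a' ≤ u' + b) (hb' : b' ≤ u' + a) :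
    clampedCover L u u' ≤ clampedCover L a a' + clampedCover L b b' := by
  have hmax : max (L - u') (L / 2) ≤ L := max_le (by linarith) (by linarith)
  unfold clampedCover
  rcases min_choice a (max (L - a') (L / 2)) with hA | hA <;>
    rcases min_choice b (max (L - b') (L / 2)) with hB | hB <;> rw [hA, hB]
  · exact (min_le_left _ _).trans hu
  · exact (min_le_right _ _).trans
      (max_le (by linarith [le_max_left (L - b') (L / 2)])
        (by linarith [le_max_right (L - b') (L / 2)]))
  · exact (min_le_right _ _).trans
      (max_le (by linarith [le_max_left (L - a') (L / 2)])
        (by linarith [le_max_right (L - a') (L / 2)]))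
  · exact (min_le_right _ _).trans
      (by linarith [le_max_right (L - a') (L / 2), le_max_right (L - b') (L / 2)])

section
variable {m ℓ : ℕ} {ι : Type*} {S : ι → Finset (Fin m)}

lemma Sparse.le_card_of_univ_subset (hm : 0 < m) (hS : Sparse m ℓ S) {Y : Finset ι}
    (hY : Finset.univ ⊆ Y.sup S) : ℓ ≤ Y.card := by
  by_contra! hcard
  obtain ⟨i₀, -, -⟩ := Finset.mem_sup.1 (hY (Finset.mem_univ ⟨0, hm⟩))
  -- list the members of `Y`, padded with `i₀` up to length `ℓ - 1`
  let g : Fin (ℓ - 1) → ι := fun t =>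
    if h : (t : ℕ) < Y.card then Y.equivFin.symm ⟨t, h⟩ else i₀
  refine hS g (Finset.eq_univ_of_forall fun x => ?_)
  obtain ⟨i, hi, hxi⟩ := Finset.mem_sup.1 (hY (Finset.mem_univ x))
  have hlt : (Y.equivFin ⟨i, hi⟩ : ℕ) < ℓ - 1 := by omega
  exact Finset.mem_sup.2 ⟨⟨_, hlt⟩, Finset.mem_univ _, by simpa [g] using hxi⟩

variable [Fintype ι]

lemma coverNum_le_card {X : Finset (Fin m)} {Y : Finset ι} (h : X ⊆ Y.sup S) :
    coverNum m ℓ S X ≤ Y.card := by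
  rw [coverNum, if_pos (h.trans (Finset.sup_mono Y.subset_univ))]
  exact Nat.sInf_le ⟨Y, h, rfl⟩

lemma exists_card_eq_coverNum {X : Finset (Fin m)} (hX : X ⊆ Finset.univ.sup S) :
    ∃ Y : Finset ι, X ⊆ Y.sup S ∧ Y.card = coverNum m ℓ S X := by
  rw [coverNum, if_pos hX]
  exact Nat.sInf_mem (s := {n | ∃ Y : Finset ι, X ⊆ Y.sup S ∧ Y.card = n})
    ⟨_, Finset.univ, hX, rfl⟩

lemma coverNum_of_not_subset {X : Finset (Fin m)} (hX : ¬X ⊆ Finset.univ.sup S) :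
    coverNum m ℓ S X = max ℓ (Fintype.card ι) := by
  rw [coverNum, if_neg hX]

lemma coverNum_le_max (X : Finset (Fin m)) :
    coverNum m ℓ S X ≤ max ℓ (Fintype.card ι) := by
  by_cases hX : X ⊆ Finset.univ.sup S
  · exact (coverNum_le_card hX).trans (le_max_right _ _)
  · exact (coverNum_of_not_subset hX).le

lemma coverNum_mono {X Y : Finset (Fin m)} (h : X ⊆ Y) :
    coverNum m ℓ S X ≤ coverNum m ℓ S Y := by
  by_cases hY : Y ⊆ Finset.univ.sup S
  · obtain ⟨A, hA, hcard⟩ := exists_card_eq_coverNum (ℓ := ℓ) hY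
    exact hcard ▸ coverNum_le_card (h.trans hA)
  · exact (coverNum_le_max X).trans (coverNum_of_not_subset hY).ge

lemma coverNum_le_add_of_subset_union {X Y Z : Finset (Fin m)} (h : X ⊆ Y ∪ Z) :
    coverNum m ℓ S X ≤ coverNum m ℓ S Y + coverNum m ℓ S Z := by
  classical
  by_cases hY : Y ⊆ Finset.univ.sup S
  · by_cases hZ : Z ⊆ Finset.univ.sup S
    · obtain ⟨A, hA, hcA⟩ := exists_card_eq_coverNum (ℓ := ℓ) hY
      obtain ⟨B, hB, hcB⟩ := exists_card_eq_coverNum (ℓ := ℓ) hZ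
      have hcover : X ⊆ (A ∪ B).sup S := by
        rw [Finset.sup_union]
        exact h.trans (Finset.union_subset_union hA hB)
      calc coverNum m ℓ S X ≤ (A ∪ B).card := coverNum_le_card hcover
        _ ≤ A.card + B.card := Finset.card_union_le A B
        _ = _ := by rw [hcA, hcB]
    · have := coverNum_le_max (ℓ := ℓ) (S := S) X
      rw [coverNum_of_not_subset hZ]
      omega
  · have := coverNum_le_max (ℓ := ℓ) (S := S) X
    rw [coverNum_of_not_subset hY]
    omega

lemma Sparse.le_coverNum_add_coverNum_compl (hm : 0 < m) (hS : Sparse m ℓ S)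
    (X : Finset (Fin m)) : ℓ ≤ coverNum m ℓ S X + coverNum m ℓ S Xᶜ := by
  classical
  by_cases hX : X ⊆ Finset.univ.sup S
  · by_cases hXc : Xᶜ ⊆ Finset.univ.sup S
    · obtain ⟨A, hA, hcA⟩ := exists_card_eq_coverNum (ℓ := ℓ) hX
      obtain ⟨B, hB, hcB⟩ := exists_card_eq_coverNum (ℓ := ℓ) hXc
      have hcover : Finset.univ ⊆ (A ∪ B).sup S := by
        rw [Finset.sup_union, ← Finset.union_compl X]
        exact Finset.union_subset_union hA hB
      calc ℓ ≤ (A ∪ B).card := hS.le_card_of_univ_subset hm hcover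
        _ ≤ A.card + B.card := Finset.card_union_le A B
        _ = _ := by rw [hcA, hcB]
    · rw [coverNum_of_not_subset hXc]
      omega
  · rw [coverNum_of_not_subset hX]
    omega

lemma vSl_eq_clampedCover {X : Finset (Fin m)}
    (h : ℓ ≤ coverNum m ℓ S X + coverNum m ℓ S Xᶜ) :
    vSl m ℓ S X = clampedCover ℓ (coverNum m ℓ S X) (coverNum m ℓ S Xᶜ) := by
  have h' : (ℓ : ℝ) ≤ coverNum m ℓ S X + coverNum m ℓ S Xᶜ := by exact_mod_cast h
  rw [vSl, clampedCover]
  split_ifs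
  · rw [max_eq_right (by linarith), min_eq_left (by linarith)]
  · rw [max_eq_left (by linarith), min_eq_right (by linarith)]
  · rw [max_eq_right (by linarith), min_eq_right (by linarith)]

end

/-- For an `ℓ`-sparse finite collection `S` of bundles of `Fin m`, the valuation `v_S^ℓ` is
normalized, monotone, and subadditive. -/
theorem vSl_normalized_monotone_subadditive
    (m ℓ d : ℕ) (hm : 0 < m) (hℓ : 0 < ℓ)
    (S : Fin d → Finset (Fin m)) (hS : Sparse m ℓ S) :
    vSl m ℓ S ∅ = 0 ∧
    (∀ X Y : Finset (Fin m), X ⊆ Y → vSl m ℓ S X ≤ vSl m ℓ S Y) ∧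
    (∀ X Y : Finset (Fin m), vSl m ℓ S (X ∪ Y) ≤ vSl m ℓ S X + vSl m ℓ S Y) := by
  have hv (X : Finset (Fin m)) := vSl_eq_clampedCover (hS.le_coverNum_add_coverNum_compl hm X)
  have hσ {X Y Z : Finset (Fin m)} (h : X ⊆ Y ∪ Z) :
      (coverNum m ℓ S X : ℝ) ≤ coverNum m ℓ S Y + coverNum m ℓ S Z := by
    exact_mod_cast coverNum_le_add_of_subset_union h
  refine ⟨?_, fun X Y hXY => ?_, fun X Y => ?_⟩
  · have hσ₀ : coverNum m ℓ S (∅ : Finset (Fin m)) = 0 :=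
      Nat.le_zero.1 (coverNum_le_card (Y := (∅ : Finset (Fin d))) (by simp))
    rw [vSl, hσ₀, Nat.cast_zero, if_pos (by positivity)]
  · rw [hv, hv]
    exact clampedCover_mono (Nat.cast_le.2 (coverNum_mono hXY))
      (Nat.cast_le.2 (coverNum_mono (Finset.compl_subset_compl.2 hXY)))
  · rw [hv, hv, hv]
    refine clampedCover_le_add (Nat.cast_nonneg _) (Nat.cast_nonneg _) (Nat.cast_nonneg _)
      (Nat.cast_nonneg _) (hσ subset_rfl) (hσ ?_) (hσ ?_) <;>
    · intro x
      simp only [Finset.mem_union, Finset.mem_compl]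
      tauto
end

section
/- Let ℓ ≥ 3 be an integer and let F be an ℓ-independent k-width-family of Fin m such that every G_i satisfies G_i ≠ ∅ and G_i ≠ Fin m. Fix b ∈ {0,1}^k and C ∈ {0,1}^{k×k}, and let v = v^ℓ_{F[b,C]} be the valuation associated with the collection F[b,C]. Then for all i, j ∈ [k]: (1) if b_i = 0 then v(G_i) = 1; (2) if b_i = 0 and C_{i,j} = 0 then v((G_i)ᶜ \ H^{(0)}_{i,j}) = ℓ − 1; (3) if b_i = 0 and C_{i,j} = 1 then v(H^{(0)}_{i,j}) = ℓ − 1; (4) if b_i = 1 and C_{i,j} = 0 then v(G_i \ H^{(1)}_{i,j}) = ℓ − 1; (5) if b_i = 1 and C_{i,j} = 1 then v(H^{(1)}_{i,j}) = ℓ − 1. -/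
/-!
A member `S p` of the collection covers a nonempty `X ⊆ S p` alone, so `σ(X) = 1`. If instead
`Xᶜ ⊆ S p`, then any cover of `X` together with `S p` covers everything, so by `ℓ`-sparseness it
has at least `ℓ - 1` members and `σ(X) ≥ ℓ - 1`; with `σ(Xᶜ) = 1 < ℓ / 2` this gives
`v(X) = ℓ - 1`. In `F[b, C]` each of the five sets of the theorem is of one of these two kinds
with respect to the bundle `S_{i,j}`.
-/

open Finset

section Cover

variable {m ℓ : ℕ} {ι : Type*} {S : ι → Finset (Fin m)}

theorem Sparse.sup_ne_univ (hS : Sparse m ℓ S) {Y : Finset ι} (hY : Y.Nonempty)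
    (hcard : #Y ≤ ℓ - 1) : Y.sup S ≠ univ := by
  obtain ⟨p, -⟩ := hY
  let e := Y.equivFin
  -- pad an enumeration of `Y` with copies of `p` to get `ℓ - 1` members
  let g : Fin (ℓ - 1) → ι := fun t => if ht : (t : ℕ) < #Y then e.symm ⟨t, ht⟩ else p
  have hle : Y.sup S ≤ univ.sup (S ∘ g) := Finset.sup_le fun y hy => by
    have hgy : g (Fin.castLE hcard (e ⟨y, hy⟩)) = y := by simp [g]
    exact hgy ▸ le_sup (f := S ∘ g) (mem_univ _)
  exact fun h => hS g (univ_subset_iff.mp (h ▸ hle))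

variable [Fintype ι] {X : Finset (Fin m)} {p : ι}

theorem coverNum_eq_one (hX : X.Nonempty) (h : X ⊆ S p) : coverNum m ℓ S X = 1 := by
  have h1 : 1 ∈ {n | ∃ Y : Finset ι, X ⊆ Y.sup S ∧ #Y = n} :=
    ⟨{p}, by simpa using h, card_singleton p⟩
  rw [coverNum, if_pos (h.trans (le_sup (mem_univ p)))]
  refine le_antisymm (Nat.sInf_le h1) (Nat.one_le_iff_ne_zero.mpr fun h0 => ?_)
  obtain ⟨Y, hY, hcard⟩ := h0 ▸ Nat.sInf_mem ⟨1, h1⟩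
  rw [card_eq_zero.mp hcard, sup_empty] at hY
  exact hX.ne_empty (subset_empty.mp hY)

theorem le_coverNum_of_compl_subset (hS : Sparse m ℓ S) (h : Xᶜ ⊆ S p) :
    ℓ - 1 ≤ coverNum m ℓ S X := by
  classical
  unfold coverNum
  split_ifs with hsub
  · refine le_csInf ⟨_, univ, hsub, rfl⟩ ?_
    rintro n ⟨Y, hY, rfl⟩
    by_contra! hlt
    have hcover : X ∪ Xᶜ ⊆ (insert p Y).sup S := by
      rw [sup_insert]
      exact union_subset (hY.trans subset_union_right) (h.trans subset_union_left)
    exact hS.sup_ne_univ (insert_nonempty p Y) ((card_insert_le p Y).trans (by omega))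
      (univ_subset_iff.mp (union_compl X ▸ hcover))
  · exact (Nat.sub_le ℓ 1).trans (le_max_left _ _)

theorem vSl_eq_one (hℓ : 3 ≤ ℓ) (hX : X.Nonempty) (h : X ⊆ S p) : vSl m ℓ S X = 1 := by
  have hℓ' : (1 : ℝ) < ℓ / 2 := by
    have : (3 : ℝ) ≤ ℓ := by exact_mod_cast hℓ
    linarith
  rw [vSl, coverNum_eq_one hX h, Nat.cast_one, if_pos hℓ']

theorem vSl_eq_sub_one (hS : Sparse m ℓ S) (hℓ : 3 ≤ ℓ) (hX : Xᶜ.Nonempty) (h : Xᶜ ⊆ S p) :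
    vSl m ℓ S X = ℓ - 1 := by
  have hℓ' : (3 : ℝ) ≤ ℓ := by exact_mod_cast hℓ
  have hcover : (ℓ : ℝ) - 1 ≤ coverNum m ℓ S X := by
    have := Nat.cast_le (α := ℝ).mpr (le_coverNum_of_compl_subset hS h)
    rwa [Nat.cast_sub (by omega), Nat.cast_one] at this
  rw [vSl, if_neg (by linarith), coverNum_eq_one hX h, Nat.cast_one, if_pos (by linarith)]

end Cover

namespace WidthFamily

variable {m k : ℕ} (F : WidthFamily m k) {b : Fin k → Fin 2} {C : Fin k → Fin k → Fin 2}
  {i : Fin k} (j : Fin k)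

theorem G_subset_coll (hb : b i = 0) : F.G i ⊆ F.coll b C (i, j) := by
  unfold coll
  split_ifs <;> exact subset_union_left

theorem compl_G_subset_coll (hb : b i = 1) : (F.G i)ᶜ ⊆ F.coll b C (i, j) := by
  unfold coll
  split_ifs <;> simp_all

theorem coll_nonempty (hG : (F.G i).Nonempty) (hG' : F.G i ≠ univ) :
    (F.coll b C (i, j)).Nonempty := by
  rcases Fin.exists_fin_two.mp ⟨b i, rfl⟩ with hb | hb
  · exact hG.mono (F.G_subset_coll j hb)
  · have hGc : (F.G i)ᶜ.Nonempty := nonempty_iff_ne_empty.mpr (by rwa [Ne, compl_eq_empty_iff])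
    exact hGc.mono (F.compl_G_subset_coll j hb)

theorem compl_compl_sdiff_H0_eq_coll (hb : b i = 0) (hC : C i j = 0) :
    ((F.G i)ᶜ \ F.H 0 i j)ᶜ = F.coll b C (i, j) := by
  ext x
  simp only [coll, hb, hC, if_true, mem_compl, mem_sdiff, mem_union]
  tauto

theorem compl_H0_eq_coll (hb : b i = 0) (hC : C i j = 1) :
    (F.H 0 i j)ᶜ = F.coll b C (i, j) := by
  ext x
  have hH := @F.H0_sub i j x
  simp only [coll, hb, hC, if_true, one_ne_zero, if_false, mem_compl, mem_sdiff,
    mem_union] at hH ⊢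
  tauto

theorem compl_sdiff_H1_eq_coll (hb : b i = 1) (hC : C i j = 0) :
    (F.G i \ F.H 1 i j)ᶜ = F.coll b C (i, j) := by
  ext x
  simp only [coll, hb, hC, if_true, one_ne_zero, if_false, mem_compl, mem_sdiff,
    mem_union]
  tauto

theorem compl_H1_eq_coll (hb : b i = 1) (hC : C i j = 1) :
    (F.H 1 i j)ᶜ = F.coll b C (i, j) := by
  ext x
  have hH := @F.H1_sub i j x
  simp only [coll, hb, hC, one_ne_zero, if_false, mem_compl, mem_sdiff,
    mem_union] at hH ⊢
  tauto

end WidthFamily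

theorem vSl_coll_properties_general
    (m k ℓ : ℕ) (hℓ : 3 ≤ ℓ)
    (F : WidthFamily m k) (hF : F.Independent ℓ)
    (hG : ∀ i : Fin k, F.G i ≠ ∅ ∧ F.G i ≠ (Finset.univ : Finset (Fin m)))
    (b : Fin k → Fin 2) (C : Fin k → Fin k → Fin 2)
    (v : Finset (Fin m) → ℝ) (hv : v = vSl m ℓ (F.coll b C)) :
    ∀ i j : Fin k,
      (b i = 0 → v (F.G i) = 1) ∧
      (b i = 0 → C i j = 0 → v ((F.G i)ᶜ \ F.H 0 i j) = (ℓ : ℝ) - 1) ∧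
      (b i = 0 → C i j = 1 → v (F.H 0 i j) = (ℓ : ℝ) - 1) ∧
      (b i = 1 → C i j = 0 → v (F.G i \ F.H 1 i j) = (ℓ : ℝ) - 1) ∧
      (b i = 1 → C i j = 1 → v (F.H 1 i j) = (ℓ : ℝ) - 1) := by
  subst hv
  intro i j
  have hGi : (F.G i).Nonempty := nonempty_iff_ne_empty.mpr (hG i).1
  have hcoll : (F.coll b C (i, j)).Nonempty := F.coll_nonempty j hGi (hG i).2
  have key {X : Finset (Fin m)} (hX : Xᶜ = F.coll b C (i, j)) :
      vSl m ℓ (F.coll b C) X = ℓ - 1 :=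
    vSl_eq_sub_one (hF b C) hℓ (hX ▸ hcoll) hX.subset
  exact ⟨fun hb => vSl_eq_one hℓ hGi (F.G_subset_coll j hb),
    fun hb hC => key (F.compl_compl_sdiff_H0_eq_coll j hb hC),
    fun hb hC => key (F.compl_H0_eq_coll j hb hC),
    fun hb hC => key (F.compl_sdiff_H1_eq_coll j hb hC),
    fun hb hC => key (F.compl_H1_eq_coll j hb hC)⟩

/-- Properties of the valuation `v = v^ℓ_{F[b,C]}` associated with an `ℓ`-independent
`k`-width-family `F` (with `ℓ ≥ 3` and every `G i` proper and nonempty). -/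
theorem vSl_coll_properties
    (m k ℓ : ℕ) (hm : 0 < m) (hℓ : 3 ≤ ℓ)
    (F : WidthFamily m k) (hF : F.Independent ℓ)
    (hG : ∀ i : Fin k, F.G i ≠ ∅ ∧ F.G i ≠ (Finset.univ : Finset (Fin m)))
    (b : Fin k → Fin 2) (C : Fin k → Fin k → Fin 2)
    (v : Finset (Fin m) → ℝ) (hv : v = vSl m ℓ (F.coll b C)) :
    ∀ i j : Fin k,
      (b i = 0 → v (F.G i) = 1) ∧
      (b i = 0 → C i j = 0 → v ((F.G i)ᶜ \ F.H 0 i j) = (ℓ : ℝ) - 1) ∧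
      (b i = 0 → C i j = 1 → v (F.H 0 i j) = (ℓ : ℝ) - 1) ∧
      (b i = 1 → C i j = 0 → v (F.G i \ F.H 1 i j) = (ℓ : ℝ) - 1) ∧
      (b i = 1 → C i j = 1 → v (F.H 1 i j) = (ℓ : ℝ) - 1) :=
  vSl_coll_properties_general m k ℓ hℓ F hF hG b C v hv
end

section
/- Let k ≥ 1 and N ≥ 1 be integers. Let A be a set of pairs (b, C) where b : Fin k → Fin 2 and C : Fin k → (Fin k → Fin 2). For each i ∈ Fin k and z ∈ Fin 2, let A_{i,z} = { C(i) : (b, C) ∈ A and b(i) = z }. If for every i ∈ Fin k we have |A_{i,0}| ≤ 1 or |A_{i,1}| ≤ N, then |A| ≤ (2^k + N)^k. -/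
/-- Counting lemma: let `A` be a set of pairs `(b, C)` with `b : Fin k → Fin 2` and
`C : Fin k → Fin k → Fin 2`, and for `i, z` let `A_{i,z}` be the set of rows `C i` over
members of `A` with `b i = z`.  If every `i` has `|A_{i,0}| ≤ 1` or `|A_{i,1}| ≤ N`, then
`|A| ≤ (2^k + N)^k`. -/
theorem card_le_of_row_bound
    (k N : ℕ) (hk : 1 ≤ k) (hN : 1 ≤ N)
    (A : Finset ((Fin k → Fin 2) × (Fin k → Fin k → Fin 2)))
    (h : ∀ i : Fin k,
      ((A.filter fun p => p.1 i = 0).image fun p => p.2 i).card ≤ 1 ∨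
      ((A.filter fun p => p.1 i = 1).image fun p => p.2 i).card ≤ N) :
    A.card ≤ (2 ^ k + N) ^ k := by
  classical
  set S : Fin k → Finset (Fin 2 × (Fin k → Fin 2)) :=
    fun i => A.image (fun p => (p.1 i, p.2 i)) with hS
  have h1 : A.card ≤ (Fintype.piFinset S).card := by
    apply Finset.card_le_card_of_injOn (fun p => fun i => (p.1 i, p.2 i))
    · intro p hp
      simp only [Finset.mem_coe, Fintype.mem_piFinset, hS] at hp ⊢
      intro i
      exact Finset.mem_image_of_mem _ hp
    · intro p _ q _ hpq
      have h1 : p.1 = q.1 := funext fun i => congrArg Prod.fst (congrFun hpq i)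
      have h2 : p.2 = q.2 := funext fun i => congrArg Prod.snd (congrFun hpq i)
      exact Prod.ext h1 h2
  have h2 : ∀ i, (S i).card ≤ 2 ^ k + N := by
    intro i
    have hsub : S i ⊆
        (((A.filter fun p => p.1 i = 0).image fun p => p.2 i).image fun r => ((0 : Fin 2), r)) ∪
        (((A.filter fun p => p.1 i = 1).image fun p => p.2 i).image fun r => ((1 : Fin 2), r)) := by
      intro x hx
      simp only [hS, Finset.mem_image] at hx
      obtain ⟨p, hp, rfl⟩ := hx
      have : p.1 i = 0 ∨ p.1 i = 1 := by omega
      rcases this with h0 | h0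
      · apply Finset.mem_union_left
        rw [h0]
        exact Finset.mem_image_of_mem _ (Finset.mem_image_of_mem _
          (Finset.mem_filter.2 ⟨hp, h0⟩))
      · apply Finset.mem_union_right
        rw [h0]
        exact Finset.mem_image_of_mem _ (Finset.mem_image_of_mem _
          (Finset.mem_filter.2 ⟨hp, h0⟩))
    calc (S i).card ≤ _ := Finset.card_le_card hsub
      _ ≤ _ + _ := Finset.card_union_le _ _
      _ ≤ ((A.filter fun p => p.1 i = 0).image fun p => p.2 i).card +
          ((A.filter fun p => p.1 i = 1).image fun p => p.2 i).card :=
        Nat.add_le_add (Finset.card_image_le) (Finset.card_image_le)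
      _ ≤ 2 ^ k + N := by
        have hb : ∀ (B : Finset ((Fin k → Fin 2) × (Fin k → Fin k → Fin 2))),
            (B.image fun p => p.2 i).card ≤ 2 ^ k := by
          intro B
          calc (B.image fun p => p.2 i).card ≤ Fintype.card (Fin k → Fin 2) :=
                Finset.card_le_univ _
            _ = 2 ^ k := by simp
        rcases h i with h0 | h0
        · have := hb (A.filter fun p => p.1 i = 1)
          omega
        · have := hb (A.filter fun p => p.1 i = 0)
          omega
  calc A.card ≤ (Fintype.piFinset S).card := h1
    _ = ∏ i, (S i).card := Fintype.card_piFinset S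
    _ ≤ ∏ _i : Fin k, (2 ^ k + N) := Finset.prod_le_prod (fun _ _ => Nat.zero_le _)
        (fun i _ => h2 i)
    _ = (2 ^ k + N) ^ k := by simp
end

section
/- Let m = t³ for an integer t ≥ 2, let φ = (√5 − 1)/2, and let V be the class of all valuations on Fin m that are XOS or single-minded. Let G be a collection of bundles of Fin m, each of cardinality m^{2/3}, such that any two distinct members of G intersect in at most 2·m^{1/3} elements. For each subcollection H ⊆ G define the valuation v_H by v_H(S) = max_{H ∈ H} |S ∩ H| (with v_∅ = 0). Let (f, p_A, p_B) be a truthful two-bidder auction rule over V × V that gives a (φ + 3·m^{−1/3})-approximation to the optimal welfare. Then for any two distinct nonempty subcollections H, H' ⊆ G, there is no function M : Finset (Fin m) → ℝ that is nondecreasing, satisfies M(∅) = 0, and is simultaneously a menu for bidder A at v_B = v_H and a menu for bidder A at v_B = v_{H'}. -/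
/-- A valuation is single-minded if there are `w ≥ 0` and a bundle `T` such that it is
`w` on bundles containing `T` and `0` otherwise. -/
def IsSingleMinded {m : ℕ} (v : Finset (Fin m) → ℝ) : Prop :=
  ∃ (w : ℝ) (T : Finset (Fin m)), 0 ≤ w ∧ ∀ S : Finset (Fin m), v S = if T ⊆ S then w else 0

/-- A valuation is XOS if it is the maximum of a nonempty finite family of nonnegative
additive clauses. -/
def IsXOS {m : ℕ} (v : Finset (Fin m) → ℝ) : Prop :=
  ∃ (𝒞 : Finset (Fin m → ℝ)) (h𝒞 : 𝒞.Nonempty),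
    (∀ c ∈ 𝒞, ∀ j : Fin m, 0 ≤ c j) ∧
    ∀ S : Finset (Fin m), v S = 𝒞.sup' h𝒞 fun c => ∑ j ∈ S, c j

/-- For a subcollection `H` of bundles, the binary XOS valuation
`v_H(S) = max_{H ∈ H} |S ∩ H|` (and `0` if `H` is empty). -/
def vFam {m : ℕ} (H : Finset (Finset (Fin m))) : Finset (Fin m) → ℝ :=
  fun S => ((H.sup fun Hs => (S ∩ Hs).card : ℕ) : ℝ)

lemma vFam_cast {m : ℕ} (H : Finset (Finset (Fin m))) (hne : H.Nonempty) (S : Finset (Fin m)) :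
    vFam H S = H.sup' hne (fun T => ((S ∩ T).card : ℝ)) := by
  rw [vFam, ← Finset.sup'_eq_sup hne]
  exact Finset.comp_sup'_eq_sup'_comp hne _ (fun x y => by push_cast [Nat.cast_max]; rfl)

lemma vFam_isXOS {m : ℕ} (H : Finset (Finset (Fin m))) (hne : H.Nonempty) :
    IsXOS (vFam H) := by
  classical
  refine ⟨H.image (fun T j => if j ∈ T then (1:ℝ) else 0), hne.image _, ?_, ?_⟩
  · intro c hc j
    obtain ⟨T, -, rfl⟩ := Finset.mem_image.mp hc
    positivity
  · intro S
    rw [Finset.sup'_image, vFam_cast H hne]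
    apply Finset.sup'_congr hne rfl
    intro T _
    simp only [Function.comp]
    rw [Finset.sum_ite_mem]
    simp [Finset.inter_comm]

lemma arith1 (u T MC : ℝ) (hu : u^2 = 1 - u) (hu1 : 1/2 < u) (hu2 : u < 1) (hT : 2 ≤ T)
    (h1 : (u*T + 3) * T - 2*T ≤ MC)
    (h2T : (u*T + 3) * ((MC - 1/2) + T^2) ≤ T^3) : False := by
  have hp : (0:ℝ) < u*T + 3 := by nlinarith
  have h3 : (u*T+3) * (((u*T+3)*T - 2*T - 1/2) + T^2) ≤ T^3 :=
    le_trans (by nlinarith) h2T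
  have hu3 : u^2 * T^3 = (1-u) * T^3 := by rw [hu]
  have hT0 : (0:ℝ) < T := by linarith
  have hu0 : (0:ℝ) < u := by linarith
  nlinarith [h3, hu3, mul_pos (mul_pos hu0 hT0) hT0, mul_pos hu0 hT0]

lemma core_menu
    (t m : ℕ) (ht : 2 ≤ t) (hm : m = t ^ 3)
    (𝒢 : Finset (Finset (Fin m)))
    (hGcard : ∀ G ∈ 𝒢, G.card = t ^ 2)
    (hGinter : ∀ G₁ ∈ 𝒢, ∀ G₂ ∈ 𝒢, G₁ ≠ G₂ → (G₁ ∩ G₂).card ≤ 2 * t)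
    (f : (Finset (Fin m) → ℝ) → (Finset (Fin m) → ℝ) → Finset (Fin m) × Finset (Fin m))
    (hdisj : ∀ vA vB : Finset (Fin m) → ℝ,
      (IsXOS vA ∨ IsSingleMinded vA) → (IsXOS vB ∨ IsSingleMinded vB) →
      Disjoint (f vA vB).1 (f vA vB).2)
    (happrox : ∀ vA vB : Finset (Fin m) → ℝ,
      (IsXOS vA ∨ IsSingleMinded vA) → (IsXOS vB ∨ IsSingleMinded vB) →
      ∀ SA SB : Finset (Fin m), Disjoint SA SB →
        ((Real.sqrt 5 - 1) / 2 + 3 / (t : ℝ)) * (vA SA + vB SB) ≤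
          vA (f vA vB).1 + vB (f vA vB).2)
    (Hin Hout : Finset (Finset (Fin m))) (hHin : Hin ⊆ 𝒢) (hHout : Hout ⊆ 𝒢)
    (hHinne : Hin.Nonempty) (hHoutne : Hout.Nonempty)
    (G : Finset (Fin m)) (hGmem : G ∈ Hin) (hGout : G ∉ Hout)
    (M : Finset (Fin m) → ℝ)
    (hmono : ∀ S T : Finset (Fin m), S ⊆ T → M S ≤ M T) (hM0 : M ∅ = 0)
    (menuIn : ∀ vA : Finset (Fin m) → ℝ, (IsXOS vA ∨ IsSingleMinded vA) →
      ∀ X : Finset (Fin m),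
        vA (f vA (vFam Hin)).1 - M (f vA (vFam Hin)).1 ≥ vA X - M X)
    (menuOut : ∀ vA : Finset (Fin m) → ℝ, (IsXOS vA ∨ IsSingleMinded vA) →
      ∀ X : Finset (Fin m),
        vA (f vA (vFam Hout)).1 - M (f vA (vFam Hout)).1 ≥ vA X - M X) :
    False := by
  classical
  have ht0 : ((t:ℝ)) ≠ 0 := by positivity
  obtain ⟨u, hu0⟩ : ∃ u : ℝ, u = (Real.sqrt 5 - 1) / 2 := ⟨_, rfl⟩
  obtain ⟨T, hT⟩ : ∃ T : ℝ, T = (t : ℝ) := ⟨_, rfl⟩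
  obtain ⟨α, hα⟩ : ∃ α : ℝ, α = (Real.sqrt 5 - 1) / 2 + 3 / (t : ℝ) := ⟨_, rfl⟩
  rw [← hα] at happrox
  have hs : Real.sqrt 5 ^ 2 = 5 := Real.sq_sqrt (by norm_num)
  have hs2 : 2 < Real.sqrt 5 := by nlinarith [Real.sqrt_nonneg 5]
  have hs3 : Real.sqrt 5 < 3 := by nlinarith [Real.sqrt_nonneg 5]
  have hu : u^2 = 1 - u := by rw [hu0]; linear_combination hs / 4
  have hu1 : 1/2 < u := by rw [hu0]; linarith
  have hu2 : u < 1 := by rw [hu0]; linarith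
  have hT2 : (2:ℝ) ≤ T := by rw [hT]; exact_mod_cast ht
  have hT0 : (0:ℝ) < T := by linarith
  have hα0 : 0 < α := by
    have h3T : (0:ℝ) < 3 / (t:ℝ) := by positivity
    rw [hα]; linarith
  have hid : α * T^2 = u * T^2 + 3 * T := by
    rw [hα, hu0, hT]; field_simp
  have hαTu : α * T = u * T + 3 := by
    rw [hα, hu0, hT]; field_simp
  have hG𝒢 : G ∈ 𝒢 := hHin hGmem
  have hGc : G.card = t ^ 2 := hGcard G hG𝒢
  have hCcard : (Finset.univ \ G : Finset (Fin m)).card = m - t ^ 2 := by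
    rw [Finset.card_sdiff_of_subset (Finset.subset_univ _), Finset.card_univ, Fintype.card_fin, hGc]
  obtain ⟨C, hC⟩ : ∃ C : Finset (Fin m), C = Finset.univ \ G := ⟨_, rfl⟩
  have hCne : C.Nonempty := by
    rw [← Finset.card_pos, hC, hCcard, hm]
    have : t ^ 2 < t ^ 3 := by nlinarith
    omega
  have hCne' : ¬ C ⊆ ∅ := fun h => hCne.ne_empty (Finset.subset_empty.mp h)
  have hCG : Disjoint C G := hC ▸ Finset.sdiff_disjoint
  -- value bounds
  have hub : ∀ (Fam : Finset (Finset (Fin m))), Fam ⊆ 𝒢 → ∀ Y, vFam Fam Y ≤ T^2 := by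
    intro Fam hFam Y
    have hn : (Fam.sup fun Hs => (Y ∩ Hs).card) ≤ t^2 := by
      refine Finset.sup_le fun Hs hHs => ?_
      rw [← hGcard Hs (hFam hHs)]
      exact Finset.card_le_card Finset.inter_subset_right
    calc vFam Fam Y ≤ ((t^2 : ℕ) : ℝ) := Nat.cast_le.mpr hn
      _ = T^2 := by rw [hT]; push_cast; ring
  have hlb : ∀ (Fam : Finset (Finset (Fin m))) (H₁ : Finset (Fin m)), Fam ⊆ 𝒢 → H₁ ∈ Fam →
      T^2 ≤ vFam Fam H₁ := by
    intro Fam H₁ hFam hH₁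
    have hn : (t^2 : ℕ) ≤ Fam.sup fun Hs => (H₁ ∩ Hs).card := by
      refine le_trans ?_ (Finset.le_sup hH₁)
      rw [Finset.inter_self, hGcard H₁ (hFam hH₁)]
    calc T^2 = ((t^2 : ℕ) : ℝ) := by rw [hT]; push_cast; ring
      _ ≤ vFam Fam H₁ := Nat.cast_le.mpr hn
  have hvG : T^2 ≤ vFam Hin G := hlb Hin G hHin hGmem
  have hXOSout : IsXOS (vFam Hout) ∨ IsSingleMinded (vFam Hout) :=
    Or.inl (vFam_isXOS Hout hHoutne)
  have hXOSin : IsXOS (vFam Hin) ∨ IsSingleMinded (vFam Hin) :=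
    Or.inl (vFam_isXOS Hin hHinne)
  -- Step 1 : lower bound on M C from the Hout scenario
  have step1 : α * T^2 - 2*T ≤ M C := by
    by_contra hcon
    push_neg at hcon
    have hMC0 : 0 ≤ M C := by
      have := hmono ∅ C (Finset.empty_subset C); rw [hM0] at this; exact this
    obtain ⟨w, hw0, hwgt, hwlt⟩ :
        ∃ w : ℝ, 0 ≤ w ∧ M C < w ∧ w + 2*T < α * T^2 :=
      ⟨(M C + (α * T^2 - 2*T)) / 2, by linarith, by linarith, by linarith⟩
    obtain ⟨v, hv⟩ : ∃ v : Finset (Fin m) → ℝ,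
        v = fun S => if C ⊆ S then w else 0 := ⟨_, rfl⟩
    have hvS : ∀ S, v S = if C ⊆ S then w else 0 := fun S => by rw [hv]
    have hSM : IsXOS v ∨ IsSingleMinded v := Or.inr ⟨w, C, hw0, hvS⟩
    have hvC : v C = w := (hvS C).trans (if_pos (subset_refl C))
    have hvemp : v ∅ = 0 := (hvS ∅).trans (if_neg hCne')
    have hmenu := menuOut v hSM C
    have hCX : C ⊆ (f v (vFam Hout)).1 := by
      by_contra hnc
      have hvX : v (f v (vFam Hout)).1 = 0 := (hvS _).trans (if_neg hnc)
      have hMX : 0 ≤ M (f v (vFam Hout)).1 := by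
        have := hmono ∅ _ (Finset.empty_subset (f v (vFam Hout)).1)
        rw [hM0] at this; exact this
      rw [hvX, hvC] at hmenu
      linarith
    have hvX : v (f v (vFam Hout)).1 = w := (hvS _).trans (if_pos hCX)
    have hYG : (f v (vFam Hout)).2 ⊆ G := by
      intro j hj
      by_contra hjG
      have hjC : j ∈ C := by rw [hC]; exact Finset.mem_sdiff.mpr ⟨Finset.mem_univ j, hjG⟩
      exact Finset.disjoint_left.mp (hdisj v (vFam Hout) hSM hXOSout) (hCX hjC) hj
    obtain ⟨H₁, hH₁⟩ := hHoutne
    have happ := happrox v (vFam Hout) hSM hXOSout ∅ H₁ (Finset.disjoint_empty_left H₁)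
    have hH₁v : T^2 ≤ vFam Hout H₁ := hlb Hout H₁ hHout hH₁
    have hY2t : vFam Hout (f v (vFam Hout)).2 ≤ 2*T := by
      have hn : (Hout.sup fun Hs => ((f v (vFam Hout)).2 ∩ Hs).card) ≤ 2*t := by
        refine Finset.sup_le fun Hs hHs => ?_
        refine le_trans (Finset.card_le_card
          (Finset.inter_subset_inter hYG (subset_refl Hs))) ?_
        exact hGinter G hG𝒢 Hs (hHout hHs) (fun he => hGout (by rw [he]; exact hHs))
      calc vFam Hout (f v (vFam Hout)).2 ≤ ((2*t : ℕ) : ℝ) := Nat.cast_le.mpr hn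
        _ = 2*T := by rw [hT]; push_cast; ring
    have hfin : α * T^2 ≤ w + 2*T := by
      calc α * T^2 ≤ α * (v ∅ + vFam Hout H₁) := by
            refine mul_le_mul_of_nonneg_left ?_ hα0.le
            rw [hvemp]; linarith
        _ ≤ v (f v (vFam Hout)).1 + vFam Hout (f v (vFam Hout)).2 := happ
        _ ≤ w + 2*T := by rw [hvX]; linarith
    linarith
  -- Step 2 : the Hin scenario
  have hMClb : (u*T + 3) * T - 2*T ≤ M C := by
    calc (u*T + 3) * T - 2*T = (u * T^2 + 3*T) - 2*T := by ring
      _ = α * T^2 - 2*T := by rw [hid]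
      _ ≤ M C := step1
  obtain ⟨w, hwdef⟩ : ∃ w : ℝ, w = M C - 1/2 := ⟨_, rfl⟩
  have hw0 : 0 ≤ w := by
    rw [hwdef]
    nlinarith [hMClb, mul_nonneg (show (0:ℝ) ≤ u - 1/2 by linarith) (sq_nonneg T),
      sq_nonneg (T - 2)]
  obtain ⟨v, hv⟩ : ∃ v : Finset (Fin m) → ℝ,
      v = fun S => if C ⊆ S then w else 0 := ⟨_, rfl⟩
  have hvS : ∀ S, v S = if C ⊆ S then w else 0 := fun S => by rw [hv]
  have hSM : IsXOS v ∨ IsSingleMinded v := Or.inr ⟨w, C, hw0, hvS⟩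
  have hvC : v C = w := (hvS C).trans (if_pos (subset_refl C))
  have hvemp : v ∅ = 0 := (hvS ∅).trans (if_neg hCne')
  have hmenu := menuIn v hSM ∅
  have hnCX : ¬ C ⊆ (f v (vFam Hin)).1 := by
    intro hsub
    have hvX : v (f v (vFam Hin)).1 = w := (hvS _).trans (if_pos hsub)
    have hMCX : M C ≤ M (f v (vFam Hin)).1 := hmono C _ hsub
    rw [hvX, hvemp, hM0] at hmenu
    rw [hwdef] at hmenu
    linarith
  have hvX : v (f v (vFam Hin)).1 = 0 := (hvS _).trans (if_neg hnCX)
  have happ := happrox v (vFam Hin) hSM hXOSin C G hCG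
  have h2 : α * (w + T^2) ≤ T^2 := by
    calc α * (w + T^2) ≤ α * (v C + vFam Hin G) := by
          refine mul_le_mul_of_nonneg_left ?_ hα0.le
          rw [hvC]; linarith
      _ ≤ v (f v (vFam Hin)).1 + vFam Hin (f v (vFam Hin)).2 := happ
      _ = vFam Hin (f v (vFam Hin)).2 := by rw [hvX]; ring
      _ ≤ T^2 := hub Hin hHin _
  have h2T : (u*T + 3) * ((M C - 1/2) + T^2) ≤ T^3 := by
    have hmul := mul_le_mul_of_nonneg_right h2 hT0.le
    calc (u*T + 3) * ((M C - 1/2) + T^2) = (α * T) * (w + T^2) := by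
          rw [hαTu, hwdef]
      _ = (α * (w + T^2)) * T := by ring
      _ ≤ T^2 * T := hmul
      _ = T^3 := by ring
  exact arith1 u T (M C) hu hu1 hu2 hT2 hMClb h2T

/-- For `m = t³`, any truthful two-bidder auction rule over `XOS ∪ SingleM` valuations that
`((√5 - 1)/2 + 3 m^{-1/3})`-approximates the optimal welfare cannot present the same
(nondecreasing, normalized) menu to bidder A against two distinct nonempty subcollections
`H, H'` of an average-intersection collection `𝒢`. -/
theorem no_common_menu_xos_singleminded
    (t : ℕ) (ht : 2 ≤ t) (m : ℕ) (hm : m = t ^ 3)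
    (𝒢 : Finset (Finset (Fin m)))
    (hGcard : ∀ G ∈ 𝒢, G.card = t ^ 2)
    (hGinter : ∀ G₁ ∈ 𝒢, ∀ G₂ ∈ 𝒢, G₁ ≠ G₂ → (G₁ ∩ G₂).card ≤ 2 * t)
    (f : (Finset (Fin m) → ℝ) → (Finset (Fin m) → ℝ) → Finset (Fin m) × Finset (Fin m))
    (pA pB : (Finset (Fin m) → ℝ) → (Finset (Fin m) → ℝ) → ℝ)
    (hdisj : ∀ vA vB : Finset (Fin m) → ℝ,
      (IsXOS vA ∨ IsSingleMinded vA) → (IsXOS vB ∨ IsSingleMinded vB) →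
      Disjoint (f vA vB).1 (f vA vB).2)
    (htruthA : ∀ vA vB vA' : Finset (Fin m) → ℝ,
      (IsXOS vA ∨ IsSingleMinded vA) → (IsXOS vB ∨ IsSingleMinded vB) →
      (IsXOS vA' ∨ IsSingleMinded vA') →
      vA (f vA vB).1 - pA vA vB ≥ vA (f vA' vB).1 - pA vA' vB)
    (htruthB : ∀ vA vB vB' : Finset (Fin m) → ℝ,
      (IsXOS vA ∨ IsSingleMinded vA) → (IsXOS vB ∨ IsSingleMinded vB) →
      (IsXOS vB' ∨ IsSingleMinded vB') →
      vB (f vA vB).2 - pB vA vB ≥ vB (f vA vB').2 - pB vA vB')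
    (happrox : ∀ vA vB : Finset (Fin m) → ℝ,
      (IsXOS vA ∨ IsSingleMinded vA) → (IsXOS vB ∨ IsSingleMinded vB) →
      ∀ SA SB : Finset (Fin m), Disjoint SA SB →
        ((Real.sqrt 5 - 1) / 2 + 3 / (t : ℝ)) * (vA SA + vB SB) ≤
          vA (f vA vB).1 + vB (f vA vB).2)
    (H H' : Finset (Finset (Fin m))) (hH : H ⊆ 𝒢) (hH' : H' ⊆ 𝒢)
    (hHne : H.Nonempty) (hH'ne : H'.Nonempty) (hne : H ≠ H') :
    ¬ ∃ M : Finset (Fin m) → ℝ,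
        (∀ S T : Finset (Fin m), S ⊆ T → M S ≤ M T) ∧ M ∅ = 0 ∧
        (∀ vA : Finset (Fin m) → ℝ, (IsXOS vA ∨ IsSingleMinded vA) →
          pA vA (vFam H) = M (f vA (vFam H)).1 ∧
          ∀ X : Finset (Fin m),
            vA (f vA (vFam H)).1 - M (f vA (vFam H)).1 ≥ vA X - M X) ∧
        (∀ vA : Finset (Fin m) → ℝ, (IsXOS vA ∨ IsSingleMinded vA) →
          pA vA (vFam H') = M (f vA (vFam H')).1 ∧
          ∀ X : Finset (Fin m),
            vA (f vA (vFam H')).1 - M (f vA (vFam H')).1 ≥ vA X - M X) := by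
  
  rintro ⟨M, hmono, hM0, mH, mH'⟩
  by_cases hsub : H ⊆ H'
  · have hnsub : ¬ H' ⊆ H := fun h2 => hne (Finset.Subset.antisymm hsub h2)
    obtain ⟨G, hG1, hG2⟩ := Finset.not_subset.mp hnsub
    exact core_menu t m ht hm 𝒢 hGcard hGinter f hdisj happrox H' H hH' hH hH'ne hHne
      G hG1 hG2 M hmono hM0 (fun vA h => (mH' vA h).2) (fun vA h => (mH vA h).2)
  · obtain ⟨G, hG1, hG2⟩ := Finset.not_subset.mp hsub
    exact core_menu t m ht hm 𝒢 hGcard hGinter f hdisj happrox H H' hH hH' hHne hH'ne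
      G hG1 hG2 M hmono hM0 (fun vA h => (mH vA h).2) (fun vA h => (mH' vA h).2)
end

section
/- Let m = t³ for an integer t ≥ 2 and let φ = (√5 − 1)/2. Let G be a collection of bundles of Fin m, each of cardinality m^{2/3}, such that any two distinct members of G intersect in at most 2·m^{1/3} elements. For each subcollection H ⊆ G define the valuation v_H by v_H(S) = max_{H ∈ H} |S ∩ H| (with v_∅ = 0). Let f be any allocation rule defined on pairs (v_A, v_B) with v_A single-minded and v_B XOS (assigning to each such pair two disjoint bundles) that gives a (φ + 3·m^{−1/3})-approximation to the optimal welfare on this domain. Then for any two distinct nonempty subcollections H, H' ⊆ G, there exists a single-minded valuation v_A, of the form v_A(S) = φ·m^{2/3} if T ⊆ S and 0 otherwise for some bundle T, such that f(v_A, v_H) ≠ f(v_A, v_{H'}). -/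
lemma vFam_isXOS_s13 {m : ℕ} (K : Finset (Finset (Fin m))) (hK : K.Nonempty) :
    IsXOS (vFam K) := by
  refine ⟨K.image (fun Hs j => if j ∈ Hs then (1:ℝ) else 0), hK.image _, ?_, ?_⟩
  · intro c hc j
    simp only [Finset.mem_image] at hc
    obtain ⟨Hs, _, rfl⟩ := hc
    by_cases h : j ∈ Hs <;> simp [h]
  · intro S
    have h1 : ∀ Hs ∈ K,
        (fun Hs => (((S ∩ Hs).card : ℕ) : ℝ)) Hs
          = ((fun c => ∑ j ∈ S, c j) ∘ (fun Hs j => if j ∈ Hs then (1:ℝ) else 0)) Hs := by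
      intro Hs _
      simp only [Function.comp]
      rw [Finset.sum_boole, Finset.filter_mem_eq_inter]
    have e1 : vFam K S = K.sup' hK (fun Hs => (((S ∩ Hs).card : ℕ) : ℝ)) := by
      unfold vFam
      rw [← Finset.sup'_eq_sup hK]
      exact Finset.comp_sup'_eq_sup'_comp hK _ (fun x y => Nat.cast_max x y)
    rw [e1, Finset.sup'_image (hK.image _)]
    exact Finset.sup'_congr hK rfl h1

lemma vFam_le {m t : ℕ} {𝒢 K : Finset (Finset (Fin m))} (hK : K ⊆ 𝒢)
    (hGcard : ∀ G ∈ 𝒢, G.card = t ^ 2) (S : Finset (Fin m)) :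
    vFam K S ≤ (t : ℝ) ^ 2 := by
  have h : (K.sup fun Hs => (S ∩ Hs).card) ≤ t ^ 2 := by
    refine Finset.sup_le fun Hs hh => ?_
    exact le_trans (Finset.card_le_card Finset.inter_subset_right) (hGcard Hs (hK hh)).le
  unfold vFam
  exact_mod_cast h

lemma vFam_self_le {m t : ℕ} {𝒢 K : Finset (Finset (Fin m))} (hK : K ⊆ 𝒢)
    (hGcard : ∀ G ∈ 𝒢, G.card = t ^ 2) {G : Finset (Fin m)} (hG : G ∈ K) :
    (t : ℝ) ^ 2 ≤ vFam K G := by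
  have h : (t ^ 2 : ℕ) ≤ K.sup fun Hs => (G ∩ Hs).card := by
    refine le_trans ?_ (Finset.le_sup hG)
    rw [Finset.inter_self, hGcard G (hK hG)]
  unfold vFam
  exact_mod_cast h

lemma key_contra (t : ℕ) (ht : 2 ≤ t) (m : ℕ) (hm : m = t ^ 3)
    (𝒢 : Finset (Finset (Fin m)))
    (hGcard : ∀ G ∈ 𝒢, G.card = t ^ 2)
    (hGinter : ∀ G₁ ∈ 𝒢, ∀ G₂ ∈ 𝒢, G₁ ≠ G₂ → (G₁ ∩ G₂).card ≤ 2 * t)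
    (f : (Finset (Fin m) → ℝ) → (Finset (Fin m) → ℝ) → Finset (Fin m) × Finset (Fin m))
    (hdisj : ∀ vA vB : Finset (Fin m) → ℝ, IsSingleMinded vA → IsXOS vB →
      Disjoint (f vA vB).1 (f vA vB).2)
    (happrox : ∀ vA vB : Finset (Fin m) → ℝ, IsSingleMinded vA → IsXOS vB →
      ∀ SA SB : Finset (Fin m), Disjoint SA SB →
        ((Real.sqrt 5 - 1) / 2 + 3 / (t : ℝ)) * (vA SA + vB SB) ≤
          vA (f vA vB).1 + vB (f vA vB).2)
    (H₁ H₂ : Finset (Finset (Fin m))) (hH₁ : H₁ ⊆ 𝒢) (hH₂ : H₂ ⊆ 𝒢)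
    (hH₂ne : H₂.Nonempty) (G : Finset (Fin m)) (hG1 : G ∈ H₁) (hG2 : G ∉ H₂)
    (heq : f (fun S => if Gᶜ ⊆ S then (Real.sqrt 5 - 1) / 2 * (t : ℝ) ^ 2 else 0) (vFam H₁) =
           f (fun S => if Gᶜ ⊆ S then (Real.sqrt 5 - 1) / 2 * (t : ℝ) ^ 2 else 0) (vFam H₂)) :
    False := by
  have h5 : Real.sqrt 5 ^ 2 = 5 := Real.sq_sqrt (by norm_num)
  have h5' : 1 < Real.sqrt 5 := by nlinarith [Real.sqrt_nonneg 5]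
  have htR : (2 : ℝ) ≤ (t : ℝ) := by exact_mod_cast ht
  have htpos : (0 : ℝ) < (t : ℝ) := by linarith
  set vA : Finset (Fin m) → ℝ :=
    fun S => if Gᶜ ⊆ S then (Real.sqrt 5 - 1) / 2 * (t : ℝ) ^ 2 else 0 with hvA
  have hSM : IsSingleMinded vA :=
    ⟨(Real.sqrt 5 - 1) / 2 * (t : ℝ) ^ 2, Gᶜ, by nlinarith, fun S => rfl⟩
  have hX1 : IsXOS (vFam H₁) := vFam_isXOS_s13 H₁ ⟨G, hG1⟩
  have hX2 : IsXOS (vFam H₂) := vFam_isXOS_s13 H₂ hH₂ne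
  have hABdisj : Disjoint (f vA (vFam H₁)).1 (f vA (vFam H₁)).2 := hdisj vA (vFam H₁) hSM hX1
  have hdiv : (3 / (t : ℝ)) * (t : ℝ) ^ 2 = 3 * (t : ℝ) := by field_simp
  have hdiv2 : (3 / (t : ℝ)) * ((t : ℝ) ^ 2 * Real.sqrt 5) = 3 * (t : ℝ) * Real.sqrt 5 := by
    rw [← mul_assoc, hdiv]
  have h5t : Real.sqrt 5 ^ 2 * (t : ℝ) ^ 2 = 5 * (t : ℝ) ^ 2 := by rw [h5]
  -- instance 1: forces Gᶜ ⊆ allocated bundle of Alice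
  have ineq1 := happrox vA (vFam H₁) hSM hX1 Gᶜ G disjoint_compl_left
  have hvAGc : vA Gᶜ = (Real.sqrt 5 - 1) / 2 * (t : ℝ) ^ 2 := if_pos subset_rfl
  have hG_lb : (t : ℝ) ^ 2 ≤ vFam H₁ G := vFam_self_le hH₁ hGcard hG1
  have hB_ub : vFam H₁ (f vA (vFam H₁)).2 ≤ (t : ℝ) ^ 2 := vFam_le hH₁ hGcard _
  rw [hvAGc] at ineq1
  have hrpos : (0 : ℝ) < (Real.sqrt 5 - 1) / 2 + 3 / (t : ℝ) := by
    have h3 : (0:ℝ) < 3 / (t : ℝ) := by positivity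
    linarith
  have hGcA : Gᶜ ⊆ (f vA (vFam H₁)).1 := by
    by_contra hGA
    have hvAA : vA (f vA (vFam H₁)).1 = 0 := if_neg hGA
    rw [hvAA] at ineq1
    have hkey : ((Real.sqrt 5 - 1) / 2 + 3 / (t : ℝ)) *
        ((Real.sqrt 5 - 1) / 2 * (t : ℝ) ^ 2 + (t : ℝ) ^ 2) ≤ (t : ℝ) ^ 2 := by
      have hmono : ((Real.sqrt 5 - 1) / 2 + 3 / (t : ℝ)) *
          ((Real.sqrt 5 - 1) / 2 * (t : ℝ) ^ 2 + (t : ℝ) ^ 2) ≤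
          ((Real.sqrt 5 - 1) / 2 + 3 / (t : ℝ)) *
          ((Real.sqrt 5 - 1) / 2 * (t : ℝ) ^ 2 + vFam H₁ G) :=
        mul_le_mul_of_nonneg_left (by linarith [hG_lb]) hrpos.le
      linarith [hmono, ineq1, hB_ub]
    nlinarith [hkey, hdiv, hdiv2, h5t, htpos, mul_nonneg (sub_nonneg.mpr h5'.le) htpos.le]
  have hvAA : vA (f vA (vFam H₁)).1 = (Real.sqrt 5 - 1) / 2 * (t : ℝ) ^ 2 := if_pos hGcA
  -- hence Bob's bundle is a subset of G
  have hBG : (f vA (vFam H₁)).2 ⊆ G := by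
    intro b hb
    by_contra hbG
    exact (Finset.disjoint_left.mp hABdisj (hGcA (Finset.mem_compl.mpr hbG))) hb
  -- instance 2
  obtain ⟨H₀, hH₀⟩ := hH₂ne
  have ineq2 := happrox vA (vFam H₂) hSM hX2 ∅ H₀ (Finset.disjoint_empty_left H₀)
  rw [← heq] at ineq2
  have hvAempty : vA ∅ = 0 := by
    apply if_neg
    intro hsub
    have hGuniv : G = Finset.univ := by
      rw [← Finset.compl_eq_empty_iff]
      exact Finset.subset_empty.mp hsub
    have hc : G.card = m := by rw [hGuniv]; simp
    rw [hGcard G (hH₁ hG1), hm] at hc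
    nlinarith [hc, ht]
  have hH₀_lb : (t : ℝ) ^ 2 ≤ vFam H₂ H₀ := vFam_self_le hH₂ hGcard hH₀
  have hB2_ub : vFam H₂ (f vA (vFam H₁)).2 ≤ 2 * (t : ℝ) := by
    have h : (H₂.sup fun Hs => ((f vA (vFam H₁)).2 ∩ Hs).card) ≤ 2 * t := by
      refine Finset.sup_le fun Hs hh => ?_
      refine le_trans (Finset.card_le_card (Finset.inter_subset_inter hBG subset_rfl)) ?_
      exact hGinter G (hH₁ hG1) Hs (hH₂ hh) (fun e => hG2 (e ▸ hh))
    unfold vFam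
    exact_mod_cast h
  rw [hvAempty, hvAA] at ineq2
  nlinarith [ineq2, hB2_ub, mul_le_mul_of_nonneg_left hH₀_lb hrpos.le, hdiv, hdiv2, htR, h5']

/-- For `m = t³`, any allocation rule on single-minded × XOS pairs guaranteeing a
`((√5 - 1)/2 + 3 m^{-1/3})`-approximation to the optimal welfare must allocate differently
(for some single-minded valuation of value `(√5-1)/2 · m^{2/3}`) against two distinct
nonempty subcollections `H, H'` of an average-intersection collection `𝒢`. -/
theorem allocation_differs_xos_singleminded
    (t : ℕ) (ht : 2 ≤ t) (m : ℕ) (hm : m = t ^ 3)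
    (𝒢 : Finset (Finset (Fin m)))
    (hGcard : ∀ G ∈ 𝒢, G.card = t ^ 2)
    (hGinter : ∀ G₁ ∈ 𝒢, ∀ G₂ ∈ 𝒢, G₁ ≠ G₂ → (G₁ ∩ G₂).card ≤ 2 * t)
    (f : (Finset (Fin m) → ℝ) → (Finset (Fin m) → ℝ) → Finset (Fin m) × Finset (Fin m))
    (hdisj : ∀ vA vB : Finset (Fin m) → ℝ, IsSingleMinded vA → IsXOS vB →
      Disjoint (f vA vB).1 (f vA vB).2)
    (happrox : ∀ vA vB : Finset (Fin m) → ℝ, IsSingleMinded vA → IsXOS vB →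
      ∀ SA SB : Finset (Fin m), Disjoint SA SB →
        ((Real.sqrt 5 - 1) / 2 + 3 / (t : ℝ)) * (vA SA + vB SB) ≤
          vA (f vA vB).1 + vB (f vA vB).2)
    (H H' : Finset (Finset (Fin m))) (hH : H ⊆ 𝒢) (hH' : H' ⊆ 𝒢)
    (hHne : H.Nonempty) (hH'ne : H'.Nonempty) (hne : H ≠ H') :
    ∃ T : Finset (Fin m),
      f (fun S => if T ⊆ S then (Real.sqrt 5 - 1) / 2 * (t : ℝ) ^ 2 else 0) (vFam H) ≠
      f (fun S => if T ⊆ S then (Real.sqrt 5 - 1) / 2 * (t : ℝ) ^ 2 else 0) (vFam H') := by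
  by_contra hcon
  push_neg at hcon
  rcases (Finset.not_subset.mp (fun h1 => hne (Finset.Subset.antisymm h1
      (fun x hx => by
        by_contra hx2
        exact key_contra t ht m hm 𝒢 hGcard hGinter f hdisj happrox H' H hH' hH hHne x hx hx2
          (hcon xᶜ).symm)))) with ⟨G, hG1, hG2⟩
  exact key_contra t ht m hm 𝒢 hGcard hGinter f hdisj happrox H H' hH hH' hH'ne G hG1 hG2
    (hcon Gᶜ)
end

section
/- Let φ = (√5 − 1)/2, let v₁ be a single-minded valuation on Fin m with desired bundle S₀ and value w ≥ 0 (i.e., v₁(S) = w if S₀ ⊆ S and 0 otherwise), and let v₂ be an XOS valuation on Fin m. Define the allocation: if w ≥ φ·v₂(Fin m), bidder 1 receives S₀ and bidder 2 receives (S₀)ᶜ; otherwise bidder 1 receives ∅ and bidder 2 receives all of Fin m. Then the welfare of this allocation is at least φ times the optimal welfare; that is, its welfare is at least φ·(v₁(A) + v₂(B)) for every pair of disjoint bundles A, B. -/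
/-!
Write `V = v₂(all items)` and let `c ∈ [0, 1]`. If bidder 1 is served (`c V ≤ w`), an allocation
`(A, B)` either gives her `S₀`, so `B ⊆ S₀ᶜ` and `c (w + v₂ B) ≤ w + v₂ S₀ᶜ`, or gives her
nothing, so `c v₂ B ≤ c V ≤ w`. If she is rejected (`w < c V`), then
`c (v₁ A + v₂ B) ≤ c w + c V ≤ (c² + c) V`, which is at most `V` exactly when `c ≤ (√5 - 1)/2`;
the golden-ratio conjugate is the largest `c` for which both cases work.
-/

open Finset

namespace IsXOS

variable {m : ℕ} {v : Finset (Fin m) → ℝ}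

theorem monotone (hv : IsXOS v) : Monotone v := by
  obtain ⟨𝒞, h𝒞, hc, hv⟩ := hv
  intro S T hST
  rw [hv, hv]
  refine Finset.sup'_le _ _ fun c hc𝒞 => ?_
  calc ∑ j ∈ S, c j ≤ ∑ j ∈ T, c j :=
        sum_le_sum_of_subset_of_nonneg hST fun j _ _ => hc c hc𝒞 j
    _ ≤ _ := le_sup' (fun c => ∑ j ∈ T, c j) hc𝒞

theorem nonneg (hv : IsXOS v) (S : Finset (Fin m)) : 0 ≤ v S := by
  obtain ⟨𝒞, ⟨c, hc𝒞⟩, hc, hv⟩ := hv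
  rw [hv]
  exact (sum_nonneg fun j _ => hc c hc𝒞 j).trans (le_sup' (fun c => ∑ j ∈ S, c j) hc𝒞)

end IsXOS

section Allocation

variable {α : Type*} [DecidableEq α]

def singleMinded (T : Finset α) (w : ℝ) (S : Finset α) : ℝ :=
  if T ⊆ S then w else 0

theorem singleMinded_le {T : Finset α} {w : ℝ} (hw : 0 ≤ w) (S : Finset α) :
    singleMinded T w S ≤ w := by
  unfold singleMinded; split_ifs <;> linarith

theorem singleMinded_nonneg {T : Finset α} {w : ℝ} (hw : 0 ≤ w) (S : Finset α) :
    0 ≤ singleMinded T w S := by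
  unfold singleMinded; split_ifs <;> linarith

theorem singleMinded_of_subset {T S : Finset α} {w : ℝ} (hTS : T ⊆ S) :
    singleMinded T w S = w :=
  if_pos hTS

variable [Fintype α] {v₂ : Finset α → ℝ} {c w : ℝ} {S₀ A B : Finset α}

theorem welfare_le_of_accept (hmono : Monotone v₂) (hnn : ∀ S, 0 ≤ v₂ S) (hc₀ : 0 ≤ c)
    (hc₁ : c ≤ 1) (hAB : Disjoint A B) (haccept : c * v₂ univ ≤ w) :
    c * (singleMinded S₀ w A + v₂ B) ≤ singleMinded S₀ w S₀ + v₂ S₀ᶜ := by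
  have hw : 0 ≤ w := (mul_nonneg hc₀ (hnn univ)).trans haccept
  have hB : c * v₂ B ≤ v₂ B := mul_le_of_le_one_left (hnn B) hc₁
  rw [singleMinded_of_subset subset_rfl]
  by_cases hS₀A : S₀ ⊆ A
  · have hBS₀ : B ⊆ S₀ᶜ := hAB.le_compl_left.trans (compl_le_compl hS₀A)
    nlinarith [hmono hBS₀, singleMinded_of_subset (w := w) hS₀A]
  · rw [singleMinded, if_neg hS₀A]
    have hBV : c * v₂ B ≤ c * v₂ univ := mul_le_mul_of_nonneg_left (hmono (subset_univ B)) hc₀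
    nlinarith [hnn S₀ᶜ]

theorem welfare_le_of_reject (hmono : Monotone v₂) (hnn : ∀ S, 0 ≤ v₂ S) (hc₀ : 0 ≤ c)
    (hc : c ^ 2 + c ≤ 1) (hw : 0 ≤ w) (hreject : w ≤ c * v₂ univ) :
    c * (singleMinded S₀ w A + v₂ B) ≤ singleMinded S₀ w ∅ + v₂ univ := by
  have hA : c * singleMinded S₀ w A ≤ c * w :=
    mul_le_mul_of_nonneg_left (singleMinded_le hw A) hc₀
  have hB : c * v₂ B ≤ c * v₂ univ := mul_le_mul_of_nonneg_left (hmono (subset_univ B)) hc₀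
  have hcw : c * w ≤ c ^ 2 * v₂ univ := by nlinarith
  nlinarith [singleMinded_nonneg (T := S₀) hw ∅, hnn univ]

end Allocation

/-- The simple allocation rule giving the single-minded bidder her desired bundle iff her
value is at least `φ = (√5 - 1)/2` times the XOS bidder's value for all items achieves a
`φ`-approximation to the optimal welfare. -/
theorem simple_rule_golden_ratio_approx
    (m : ℕ) (S₀ : Finset (Fin m)) (w : ℝ) (hw : 0 ≤ w)
    (v₁ : Finset (Fin m) → ℝ) (hv₁ : ∀ S : Finset (Fin m), v₁ S = if S₀ ⊆ S then w else 0)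
    (v₂ : Finset (Fin m) → ℝ) (hv₂ : IsXOS v₂) :
    ∀ A B : Finset (Fin m), Disjoint A B →
      (Real.sqrt 5 - 1) / 2 * (v₁ A + v₂ B) ≤
        if (Real.sqrt 5 - 1) / 2 * v₂ (Finset.univ : Finset (Fin m)) ≤ w then
          v₁ S₀ + v₂ S₀ᶜ
        else v₁ ∅ + v₂ (Finset.univ : Finset (Fin m)) := by
  obtain rfl : v₁ = singleMinded S₀ w := funext hv₁
  have hψ : (√5 - 1) / 2 = -Real.goldenConj := by rw [Real.goldenConj]; ring
  have hψ₀ : 0 ≤ -Real.goldenConj := neg_nonneg.mpr Real.goldenConj_neg.le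
  intro A B hAB
  rw [hψ]
  split_ifs with haccept
  · exact welfare_le_of_accept hv₂.monotone hv₂.nonneg hψ₀
      (by linarith [Real.neg_one_lt_goldenConj]) hAB haccept
  · exact welfare_le_of_reject hv₂.monotone hv₂.nonneg hψ₀
      (by rw [neg_sq, Real.goldenConj_sq]; linarith) hw (not_le.mp haccept).le
end

section
/- Let ℓ ≥ 3 be an integer and let F be an ℓ-independent k-width-family of Fin m with every G_i satisfying G_i ≠ ∅ and G_i ≠ Fin m. Fix indices i*, j* ∈ [k] and vectors b₁, b₂ ∈ {0,1}^k, matrices C₁, C₂ ∈ {0,1}^{k×k} with b₁(i*) = b₂(i*) = 0, C₁(i*, j*) = 0, C₂(i*, j*) = 1, and set v₁ = v^ℓ_{F[b₁,C₁]} and v₂ = v^ℓ_{F[b₂,C₂]}. Let (f, p_A, p_B, p_C) be a three-bidder auction rule whose valuation class for bidder A contains all single-minded valuations, and let M : Finset (Fin m) → ℝ be nondecreasing with M(∅) = 0 such that M is a menu for bidder A at the profile (v₁, v₂) of bidders B and C. If M((G_{i*})ᶜ) ≤ (√3 − 1)·ℓ, then, writing v* for the single-minded valuation with value (√3 − 1)·ℓ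 + 1 on bundles containing (G_{i*})ᶜ and 0 elsewhere: (a) the welfare of f on the profile (v*, v₁, v₂) is at most (√3 − 1)·ℓ + 3; and (b) there exist pairwise disjoint bundles (S_A, S_B, S_C) with v*(S_A) + v₁(S_B) + v₂(S_C) ≥ 2(ℓ − 1). -/
lemma exists_cover_fun {ι : Type*} (N : ℕ) (Y : Finset ι) (hY : Y.Nonempty) (hc : Y.card ≤ N) :
    ∃ g : Fin N → ι, ∀ y ∈ Y, ∃ t, g t = y := by
  classical
  obtain ⟨y₀, hy₀⟩ := hY
  refine ⟨fun t => if h : (t : ℕ) < Y.card then (Y.equivFin.symm ⟨t, h⟩ : ι) else y₀, ?_⟩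
  intro y hy
  set s : Fin Y.card := Y.equivFin ⟨y, hy⟩ with hs
  refine ⟨⟨s, lt_of_lt_of_le s.2 hc⟩, ?_⟩
  simp only [s.2, dif_pos]
  have : Y.equivFin.symm s = ⟨y, hy⟩ := Y.equivFin.symm_apply_apply _
  simpa [Fin.eta] using congrArg Subtype.val this

lemma coverNum_le_one (m ℓ : ℕ) {ι : Type*} [Fintype ι] (S : ι → Finset (Fin m))
    (X : Finset (Fin m)) (i : ι) (hXi : X ⊆ S i) : coverNum m ℓ S X ≤ 1 := by
  unfold coverNum
  have hcov : X ⊆ Finset.univ.sup S := hXi.trans (Finset.le_sup (Finset.mem_univ i))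
  rw [if_pos hcov]
  exact Nat.sInf_le ⟨{i}, by simpa [Finset.sup_singleton] using hXi, Finset.card_singleton i⟩

lemma one_le_coverNum (m ℓ : ℕ) {ι : Type*} [Fintype ι] (S : ι → Finset (Fin m))
    (X : Finset (Fin m)) (hX : X.Nonempty) (hℓ : 1 ≤ ℓ) : 1 ≤ coverNum m ℓ S X := by
  unfold coverNum
  split_ifs with h
  · rw [Nat.one_le_iff_ne_zero]
    intro h0
    have hmem : 0 ∈ {n | ∃ Y : Finset ι, X ⊆ Y.sup S ∧ Y.card = n} := by
      rw [← h0]; exact Nat.sInf_mem ⟨Fintype.card ι, Finset.univ, h, rfl⟩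
    obtain ⟨Y, hYX, hYc⟩ := hmem
    rw [Finset.card_eq_zero] at hYc
    subst hYc
    simp only [Finset.sup_empty] at hYX
    exact hX.ne_empty (Finset.subset_empty.mp hYX)
  · exact le_trans hℓ (le_max_left _ _)

lemma coverNum_ge (m ℓ : ℕ) {ι : Type*} [Fintype ι] (hℓ : 3 ≤ ℓ)
    (S : ι → Finset (Fin m)) (hsp : Sparse m ℓ S) (X : Finset (Fin m)) (i₀ : ι)
    (hcompl : Xᶜ ⊆ S i₀) : ℓ - 1 ≤ coverNum m ℓ S X := by
  classical
  unfold coverNum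
  split_ifs with h
  · refine le_csInf ⟨Fintype.card ι, Finset.univ, h, rfl⟩ ?_
    rintro n ⟨Y, hYX, rfl⟩
    by_contra hlt
    push_neg at hlt
    set Y' := insert i₀ Y with hY'
    have hY'ne : Y'.Nonempty := ⟨i₀, Finset.mem_insert_self _ _⟩
    have hY'c : Y'.card ≤ ℓ - 1 :=
      le_trans (Finset.card_insert_le _ _) (by omega)
    obtain ⟨g, hg⟩ := exists_cover_fun (ℓ - 1) Y' hY'ne hY'c
    apply hsp g
    apply Finset.eq_univ_iff_forall.2
    intro x
    have hx : ∃ y ∈ Y', x ∈ S y := by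
      by_cases hxX : x ∈ X
      · obtain ⟨y, hyY, hxy⟩ := Finset.mem_sup.mp (hYX hxX)
        exact ⟨y, Finset.mem_insert_of_mem hyY, hxy⟩
      · exact ⟨i₀, Finset.mem_insert_self _ _, hcompl (Finset.mem_compl.mpr hxX)⟩
    obtain ⟨y, hyY', hxy⟩ := hx
    obtain ⟨t, ht⟩ := hg y hyY'
    exact Finset.mem_sup.mpr ⟨t, Finset.mem_univ t, ht ▸ hxy⟩
  · exact le_trans (by omega) (le_max_left ℓ _)

lemma vSl_le_one (m ℓ : ℕ) {ι : Type*} [Fintype ι] (hℓ : 3 ≤ ℓ) (S : ι → Finset (Fin m))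
    (X : Finset (Fin m)) (i : ι) (hXi : X ⊆ S i) : vSl m ℓ S X ≤ 1 := by
  have h1 := coverNum_le_one m ℓ S X i hXi
  have hc : (coverNum m ℓ S X : ℝ) ≤ 1 := by exact_mod_cast h1
  have hl3 : (3 : ℝ) ≤ (ℓ : ℝ) := by exact_mod_cast hℓ
  unfold vSl
  rw [if_pos (lt_of_le_of_lt hc (by linarith))]
  exact hc

lemma vSl_compl_eq (m ℓ : ℕ) {ι : Type*} [Fintype ι] (hℓ : 3 ≤ ℓ) (S : ι → Finset (Fin m))
    (hsp : Sparse m ℓ S) (T : Finset (Fin m)) (i₀ : ι) (hT : T ⊆ S i₀) (hTne : T.Nonempty) :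
    vSl m ℓ S Tᶜ = (ℓ : ℝ) - 1 := by
  have hge := coverNum_ge m ℓ hℓ S hsp Tᶜ i₀ (by simpa using hT)
  have hcT : coverNum m ℓ S Tᶜᶜ = 1 := by
    rw [compl_compl]
    exact le_antisymm (coverNum_le_one m ℓ S T i₀ hT)
      (one_le_coverNum m ℓ S T hTne (by omega))
  have hl3 : (3 : ℝ) ≤ (ℓ : ℝ) := by exact_mod_cast hℓ
  have hgeR : (ℓ : ℝ) - 1 ≤ (coverNum m ℓ S Tᶜ : ℝ) := by
    have := (Nat.cast_le (α := ℝ)).2 hge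
    rwa [Nat.cast_sub (by omega), Nat.cast_one] at this
  unfold vSl
  rw [if_neg (not_lt.2 (by linarith)), if_pos (by rw [hcT]; push_cast; linarith), hcT]
  norm_num

/-- A cheap menu price on `(G_{i*})ᶜ` forces low welfare against the pair `(v₁, v₂)` while
high welfare is available. -/
theorem low_price_implies_bad_welfare
    (m k ℓ : ℕ) (hm : 0 < m) (hℓ : 3 ≤ ℓ)
    (F : WidthFamily m k) (hF : F.Independent ℓ)
    (hG : ∀ i : Fin k, F.G i ≠ ∅ ∧ F.G i ≠ (Finset.univ : Finset (Fin m)))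
    (istar jstar : Fin k)
    (b₁ b₂ : Fin k → Fin 2) (C₁ C₂ : Fin k → Fin k → Fin 2)
    (hb₁ : b₁ istar = 0) (hb₂ : b₂ istar = 0)
    (hC₁ : C₁ istar jstar = 0) (hC₂ : C₂ istar jstar = 1)
    (v₁ v₂ : Finset (Fin m) → ℝ)
    (hv₁ : v₁ = vSl m ℓ (F.coll b₁ C₁)) (hv₂ : v₂ = vSl m ℓ (F.coll b₂ C₂))
    (VA : Set (Finset (Fin m) → ℝ)) (hVA : ∀ v : Finset (Fin m) → ℝ, IsSingleMinded v → v ∈ VA)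
    (f : (Finset (Fin m) → ℝ) → (Finset (Fin m) → ℝ) → (Finset (Fin m) → ℝ) →
      Finset (Fin m) × Finset (Fin m) × Finset (Fin m))
    (pA pB pC : (Finset (Fin m) → ℝ) → (Finset (Fin m) → ℝ) → (Finset (Fin m) → ℝ) → ℝ)
    (hdisj : ∀ vA vB vC : Finset (Fin m) → ℝ,
      Disjoint (f vA vB vC).1 (f vA vB vC).2.1 ∧
      Disjoint (f vA vB vC).1 (f vA vB vC).2.2 ∧
      Disjoint (f vA vB vC).2.1 (f vA vB vC).2.2)
    (M : Finset (Fin m) → ℝ)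
    (hMmono : ∀ S T : Finset (Fin m), S ⊆ T → M S ≤ M T) (hM0 : M ∅ = 0)
    (hmenu : ∀ vA ∈ VA, pA vA v₁ v₂ = M (f vA v₁ v₂).1 ∧
      ∀ X : Finset (Fin m), vA (f vA v₁ v₂).1 - M (f vA v₁ v₂).1 ≥ vA X - M X)
    (hprice : M ((F.G istar)ᶜ) ≤ (Real.sqrt 3 - 1) * ℓ)
    (vstar : Finset (Fin m) → ℝ)
    (hvstar : ∀ S : Finset (Fin m),
      vstar S = if (F.G istar)ᶜ ⊆ S then (Real.sqrt 3 - 1) * ℓ + 1 else 0) :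
    (vstar (f vstar v₁ v₂).1 + v₁ (f vstar v₁ v₂).2.1 + v₂ (f vstar v₁ v₂).2.2 ≤
      (Real.sqrt 3 - 1) * ℓ + 3) ∧
    (∃ SA SB SC : Finset (Fin m),
      Disjoint SA SB ∧ Disjoint SA SC ∧ Disjoint SB SC ∧
      2 * ((ℓ : ℝ) - 1) ≤ vstar SA + v₁ SB + v₂ SC) := by
  classical
  set G := F.G istar with hGdef
  set H0 := F.H 0 istar jstar with hH0def
  have hT₁ : F.coll b₁ C₁ (istar, jstar) = G ∪ H0 := by
    simp [WidthFamily.coll, hb₁, hC₁]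
    rfl
  have hT₂ : F.coll b₂ C₂ (istar, jstar) = G ∪ (Gᶜ \ H0) := by
    simp [WidthFamily.coll, hb₂, hC₂]
    rfl
  have hGne : G.Nonempty := Finset.nonempty_iff_ne_empty.mpr (hG istar).1
  have hsqrt : (1 : ℝ) ≤ Real.sqrt 3 := by
    rw [show (1 : ℝ) = Real.sqrt 1 from Real.sqrt_one.symm]
    exact Real.sqrt_le_sqrt (by norm_num)
  have hl3 : (3 : ℝ) ≤ (ℓ : ℝ) := by exact_mod_cast hℓ
  set w : ℝ := (Real.sqrt 3 - 1) * ℓ + 1 with hwdef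
  have hw0 : 0 ≤ w := by
    have : 0 ≤ (Real.sqrt 3 - 1) * ℓ := mul_nonneg (by linarith) (by positivity)
    linarith
  constructor
  · -- part (a)
    obtain ⟨hp, hopt⟩ := hmenu vstar (hVA vstar ⟨w, Gᶜ, hw0, hvstar⟩)
    set A := (f vstar v₁ v₂).1 with hA
    set B := (f vstar v₁ v₂).2.1 with hB
    set Cc := (f vstar v₁ v₂).2.2 with hC
    have hMA : (0 : ℝ) ≤ M A := by
      have := hMmono ∅ A (Finset.empty_subset _)
      rwa [hM0] at this
    have hvGc : vstar Gᶜ = w := by rw [hvstar]; simp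
    have hA1 : (1 : ℝ) ≤ vstar A := by
      have := hopt Gᶜ
      rw [hvGc] at this
      have hMGc := hprice
      simp only [hwdef] at *
      linarith
    have hsub : Gᶜ ⊆ A := by
      by_contra hns
      rw [hvstar, if_neg hns] at hA1
      linarith
    have hvA : vstar A = w := by rw [hvstar, if_pos hsub]
    obtain ⟨dAB, dAC, dBC⟩ := hdisj vstar v₁ v₂
    have hBG : B ⊆ G := by
      intro x hx
      by_contra hxG
      exact Finset.disjoint_left.mp dAB (hsub (Finset.mem_compl.mpr hxG)) hx
    have hCG : Cc ⊆ G := by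
      intro x hx
      by_contra hxG
      exact Finset.disjoint_left.mp dAC (hsub (Finset.mem_compl.mpr hxG)) hx
    have hv₁B : v₁ B ≤ 1 := by
      rw [hv₁]
      exact vSl_le_one m ℓ hℓ _ B (istar, jstar)
        (by rw [hT₁]; exact hBG.trans Finset.subset_union_left)
    have hv₂C : v₂ Cc ≤ 1 := by
      rw [hv₂]
      exact vSl_le_one m ℓ hℓ _ Cc (istar, jstar)
        (by rw [hT₂]; exact hCG.trans Finset.subset_union_left)
    rw [hvA]
    simp only [hwdef]
    linarith
  · -- part (b)
    refine ⟨∅, (G ∪ H0)ᶜ, (G ∪ (Gᶜ \ H0))ᶜ, Finset.disjoint_empty_left _,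
      Finset.disjoint_empty_left _, ?_, ?_⟩
    · rw [Finset.disjoint_left]
      intro x hx hx2
      simp only [Finset.mem_compl, Finset.mem_union, Finset.mem_sdiff, not_or, not_and,
        not_not] at hx hx2
      tauto
    · have h1 : v₁ ((G ∪ H0)ᶜ) = (ℓ : ℝ) - 1 := by
        rw [hv₁]
        exact vSl_compl_eq m ℓ hℓ _ (hF b₁ C₁) (G ∪ H0) (istar, jstar) (le_of_eq hT₁.symm)
          (hGne.mono Finset.subset_union_left)
      have h2 : v₂ ((G ∪ (Gᶜ \ H0))ᶜ) = (ℓ : ℝ) - 1 := by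
        rw [hv₂]
        exact vSl_compl_eq m ℓ hℓ _ (hF b₂ C₂) (G ∪ (Gᶜ \ H0)) (istar, jstar)
          (le_of_eq hT₂.symm) (hGne.mono Finset.subset_union_left)
      have h0 : 0 ≤ vstar ∅ := by
        rw [hvstar]; split_ifs
        · exact hw0
        · exact le_refl 0
      rw [h1, h2]
      linarith
end
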